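/- arXiv:1705.07684 — 8 statements merged into one kernel-verified Lean document; each statement's English description precedes it below -/
import Mathlib

section
/- Let R > 0 and let f : [0, R) → ℝ be continuously differentiable with f(0) = 0, f'(0) = −1, and f' strictly increasing, and let ν := sup{t ∈ [0, R) : f'(t) < 0}. Then the Newton iteration map n_f(t) := t − f(t)/f'(t) is well defined on [0, ν) and satisfies n_f(t) < 0 for all t ∈ (0, ν). -/
/-!
On `[0, ν)` the derivative is negative: each such `t` lies below some `s < R` with `f' s < 0`,
and `f'` is increasing. For `0 < t < ν` the mean value theorem gives `f t = t f'(c)` with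
`0 < c < t`, so `f t < t f'(t)` by strict monotonicity of `f'`; dividing by `f' t < 0` yields
`t < f t / f' t`, i.e. `n_f(t) < 0`.
-/

open Set

lemma Real.exists_gt_of_nonneg_of_lt_sSup {S : Set ℝ} {t : ℝ} (ht : 0 ≤ t) (h : t < sSup S) :
    ∃ s ∈ S, t < s := by
  rcases S.eq_empty_or_nonempty with rfl | hS
  · rw [Real.sSup_empty] at h
    exact absurd ht h.not_ge
  · exact exists_lt_of_lt_csSup hS h

lemma neg_and_lt_of_lt_sSup_neg {g : ℝ → ℝ} {R t : ℝ} (hg : MonotoneOn g (Ico 0 R))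
    (ht : t ∈ Ico 0 (sSup {s | s ∈ Ico 0 R ∧ g s < 0})) : g t < 0 ∧ t < R := by
  obtain ⟨s, ⟨hs, hgs⟩, hts⟩ := Real.exists_gt_of_nonneg_of_lt_sSup ht.1 ht.2
  have htR : t < R := hts.trans hs.2
  exact ⟨(hg ⟨ht.1, htR⟩ hs hts.le).trans_lt hgs, htR⟩

lemma sub_lt_mul_of_strictMonoOn_deriv {f f' : ℝ → ℝ} {a b : ℝ} (hab : a < b)
    (hf : ∀ x ∈ Icc a b, HasDerivWithinAt f (f' x) (Icc a b) x)
    (hf' : StrictMonoOn f' (Icc a b)) : f b - f a < (b - a) * f' b := by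
  have hcont : ContinuousOn f (Icc a b) := fun x hx => (hf x hx).continuousWithinAt
  have hderiv : ∀ x ∈ Ioo a b, HasDerivAt f (f' x) x := fun x hx =>
    (hf x (Ioo_subset_Icc_self hx)).hasDerivAt (Icc_mem_nhds hx.1 hx.2)
  obtain ⟨c, hc, hslope⟩ := exists_hasDerivAt_eq_slope f f' hab hcont hderiv
  have hlt : f' c < f' b := hf' (Ioo_subset_Icc_self hc) (right_mem_Icc.2 hab.le) hc.2
  rw [hslope, div_lt_iff₀ (sub_pos.2 hab)] at hlt
  linarith

theorem stmt_1_general (R : ℝ) (f f' : ℝ → ℝ)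
    (hderiv : ∀ t ∈ Set.Ico 0 R, HasDerivWithinAt f (f' t) (Set.Ico 0 R) t)
    (h1a : f 0 = 0)
    (h2 : StrictMonoOn f' (Set.Ico 0 R))
    (ν : ℝ) (hν : ν = sSup {t | t ∈ Set.Ico 0 R ∧ f' t < 0})
    (nf : ℝ → ℝ) (hnf : ∀ t, nf t = t - f t / f' t) :
    (∀ t ∈ Set.Ico 0 ν, f' t ≠ 0) ∧ ∀ t ∈ Set.Ioo 0 ν, nf t < 0 := by
  subst hν
  refine ⟨fun t ht => (neg_and_lt_of_lt_sSup_neg h2.monotoneOn ht).1.ne, fun t ht => ?_⟩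
  obtain ⟨hneg, htR⟩ := neg_and_lt_of_lt_sSup_neg h2.monotoneOn (Ioo_subset_Ico_self ht)
  have hsub : Icc 0 t ⊆ Ico 0 R := Icc_subset_Ico_right htR
  have hconvex : f t - f 0 < (t - 0) * f' t :=
    sub_lt_mul_of_strictMonoOn_deriv ht.1
      (fun x hx => (hderiv x (hsub hx)).mono hsub) (h2.mono hsub)
  rw [h1a, sub_zero, sub_zero] at hconvex
  have hlt : t < f t / f' t := by
    rw [lt_div_iff_of_neg hneg]
    linarith
  rw [hnf]
  linarith

theorem stmt_1 (R : ℝ) (hR : 0 < R) (f f' : ℝ → ℝ)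
    (hderiv : ∀ t ∈ Set.Ico 0 R, HasDerivWithinAt f (f' t) (Set.Ico 0 R) t)
    (hcont : ContinuousOn f' (Set.Ico 0 R))
    (h1a : f 0 = 0) (h1b : f' 0 = -1)
    (h2 : StrictMonoOn f' (Set.Ico 0 R))
    (ν : ℝ) (hν : ν = sSup {t | t ∈ Set.Ico 0 R ∧ f' t < 0})
    (nf : ℝ → ℝ) (hnf : ∀ t, nf t = t - f t / f' t) :
    (∀ t ∈ Set.Ico 0 ν, f' t ≠ 0) ∧ ∀ t ∈ Set.Ioo 0 ν, nf t < 0 :=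
  stmt_1_general R f f' hderiv h1a h2 ν hν nf hnf
end

section
/- Let R > 0 and let f : [0, R) → ℝ be continuously differentiable with f(0) = 0, f'(0) = −1, and f' strictly increasing, and let ν := sup{t ∈ [0, R) : f'(t) < 0} and n_f(t) := t − f(t)/f'(t) for t ∈ [0, ν). Then |n_f(t)|/t tends to 0 as t tends to 0 from the right. -/
/-!
Since `f 0 = 0`, the quotient `f t / t` is a difference quotient at `0`, so it tends to
`f' 0 = -1`; by continuity `f' t` tends to `-1` as well. Hence
`n_f(t) / t = 1 - (f t / t) / f' t → 1 - (-1) / (-1) = 0`.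
-/

open Filter Topology Set

theorem HasDerivWithinAt.tendsto_div_nhdsGT_zero {f : ℝ → ℝ} {d : ℝ} {s : Set ℝ}
    (hf : HasDerivWithinAt f d s 0) (hs : s ∈ 𝓝[>] 0) (hf0 : f 0 = 0) :
    Tendsto (fun t => f t / t) (𝓝[>] 0) (𝓝 d) := by
  have hslope := (hasDerivWithinAt_iff_tendsto_slope' (lt_irrefl (0 : ℝ))).mp
    (hf.mono_of_mem_nhdsWithin hs)
  refine hslope.congr fun t => ?_
  simp only [slope, hf0, sub_zero, vsub_eq_sub, smul_eq_mul, div_eq_inv_mul]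

theorem tendsto_newton_step_div_nhdsGT_zero {f f' : ℝ → ℝ} {d : ℝ} (hd : d ≠ 0)
    (hf : Tendsto (fun t => f t / t) (𝓝[>] 0) (𝓝 d)) (hf' : Tendsto f' (𝓝[>] 0) (𝓝 d)) :
    Tendsto (fun t => (t - f t / f' t) / t) (𝓝[>] 0) (𝓝 0) := by
  have hlim : Tendsto (fun t => 1 - (f t / t) / f' t) (𝓝[>] 0) (𝓝 (1 - d / d)) :=
    tendsto_const_nhds.sub (hf.div hf' hd)
  rw [div_self hd, sub_self] at hlim
  refine hlim.congr' ?_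
  filter_upwards [self_mem_nhdsWithin] with t (ht : 0 < t)
  rw [sub_div, div_self ht.ne', div_div, div_div, mul_comm]

theorem stmt_2_general (R : ℝ) (hR : 0 < R) (f f' : ℝ → ℝ)
    (hderiv : ∀ t ∈ Set.Ico 0 R, HasDerivWithinAt f (f' t) (Set.Ico 0 R) t)
    (hcont : ContinuousOn f' (Set.Ico 0 R))
    (h1a : f 0 = 0) (h1b : f' 0 = -1)
    (nf : ℝ → ℝ) (hnf : ∀ t, nf t = t - f t / f' t) :
    Filter.Tendsto (fun t => |nf t| / t) (nhdsWithin 0 (Set.Ioi 0)) (nhds 0) := by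
  have h0 : (0 : ℝ) ∈ Ico 0 R := ⟨le_rfl, hR⟩
  have hIco : Ico 0 R ∈ 𝓝[>] (0 : ℝ) := Ico_mem_nhdsGT hR
  have hslope : Tendsto (fun t => f t / t) (𝓝[>] 0) (𝓝 (-1)) :=
    h1b ▸ (hderiv 0 h0).tendsto_div_nhdsGT_zero hIco h1a
  have hderiv0 : Tendsto f' (𝓝[>] 0) (𝓝 (-1)) :=
    h1b ▸ (hcont 0 h0).mono_of_mem_nhdsWithin hIco
  have hratio := (tendsto_newton_step_div_nhdsGT_zero (by norm_num) hslope hderiv0).abs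
  rw [abs_zero] at hratio
  refine hratio.congr' ?_
  filter_upwards [self_mem_nhdsWithin] with t (ht : 0 < t)
  rw [hnf, abs_div, abs_of_pos ht]

theorem stmt_2 (R : ℝ) (hR : 0 < R) (f f' : ℝ → ℝ)
    (hderiv : ∀ t ∈ Set.Ico 0 R, HasDerivWithinAt f (f' t) (Set.Ico 0 R) t)
    (hcont : ContinuousOn f' (Set.Ico 0 R))
    (h1a : f 0 = 0) (h1b : f' 0 = -1)
    (h2 : StrictMonoOn f' (Set.Ico 0 R))
    (ν : ℝ) (hν : ν = sSup {t | t ∈ Set.Ico 0 R ∧ f' t < 0})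
    (nf : ℝ → ℝ) (hnf : ∀ t, nf t = t - f t / f' t) :
    Filter.Tendsto (fun t => |nf t| / t) (nhdsWithin 0 (Set.Ioi 0)) (nhds 0) :=
  stmt_2_general R hR f f' hderiv hcont h1a h1b nf hnf
end

section
/- Let Ω ⊂ ℝⁿ be open, F : Ω → ℝⁿ continuously differentiable, x* ∈ Ω with F(x*) = 0 and F'(x*) invertible. Let R > 0, κ := sup{t ∈ [0, R) : B(x*, t) ⊂ Ω}, and suppose f : [0, R) → ℝ is continuously differentiable with f(0) = 0, f'(0) = −1, f' strictly increasing, and for all τ ∈ [0, 1] and all x ∈ B(x*, κ): ‖F'(x*)⁻¹[F'(x) − F'(x* + τ(x − x*))]‖ ≤ f'(‖x − x*‖) − f'(τ‖x − x*‖). Let ν := sup{t ∈ [0, R) : f'(t) < 0}. Then for every x ∈ B(x*, min{κ, ν}), the linear map F'(x) is invertible and ‖F'(x)⁻¹ F'(x*)‖ ≤ 1/|f'(‖x − x*‖)|. -/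
/-!
At `τ = 0` the majorant condition reads `‖F'(x*)⁻¹ (F'(x) - F'(x*))‖ ≤ f'(‖x - x*‖) + 1`, and this
is `< 1` as soon as `f'(‖x - x*‖) < 0`, which monotonicity of `f'` guarantees below `ν`. Banach's
perturbation lemma then makes `F'(x)` invertible with
`‖F'(x)⁻¹ F'(x*)‖ ≤ (1 - (f'(‖x - x*‖) + 1))⁻¹ = 1 / |f'(‖x - x*‖)|`.
-/

section BanachPerturbation

variable {𝕜 E : Type*} [NontriviallyNormedField 𝕜] [NormedAddCommGroup E] [NormedSpace 𝕜 E]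
  [CompleteSpace E]

theorem ContinuousLinearMap.norm_inverse_one_sub_le {T : E →L[𝕜] E} (hT : ‖T‖ < 1) :
    ‖Ring.inverse (1 - T)‖ ≤ (1 - ‖T‖)⁻¹ := by
  rw [NormedRing.inverse_one_sub T hT]
  have hgeom := tsum_geometric_le_of_norm_lt_one T hT
  have hone : ‖(1 : E →L[𝕜] E)‖ ≤ 1 := ContinuousLinearMap.norm_id_le
  exact hgeom.trans (by linarith)

theorem ContinuousLinearMap.isUnit_and_norm_inverse_mul_le {A B : E →L[𝕜] E} (hA : IsUnit A)
    (hAB : ‖Ring.inverse A * (B - A)‖ < 1) :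
    IsUnit B ∧ ‖Ring.inverse B * A‖ ≤ (1 - ‖Ring.inverse A * (B - A)‖)⁻¹ := by
  set T := -(Ring.inverse A * (B - A))
  have hT : ‖T‖ < 1 := by rwa [norm_neg]
  have hB : B = A * (1 - T) := by
    rw [sub_neg_eq_add, mul_add, mul_one, ← mul_assoc, Ring.mul_inverse_cancel A hA, one_mul,
      add_sub_cancel]
  have hunit : IsUnit (1 - T) := (Units.oneSub T hT).isUnit
  refine ⟨hB ▸ hA.mul hunit, ?_⟩
  obtain ⟨u, rfl⟩ := hA
  obtain ⟨v, hv⟩ := hunit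
  have hinv : Ring.inverse B * u = Ring.inverse (1 - T) := by
    rw [hB, ← hv, ← Units.val_mul, Ring.inverse_unit, Ring.inverse_unit, mul_inv_rev,
      Units.val_mul, mul_assoc, Units.inv_mul, mul_one]
  rw [hinv, ← norm_neg (Ring.inverse _ * _)]
  exact norm_inverse_one_sub_le hT

end BanachPerturbation

theorem MonotoneOn.neg_of_lt_sSup_neg {g : ℝ → ℝ} {R t : ℝ} (hg : MonotoneOn g (Set.Ico 0 R))
    (ht₀ : 0 ≤ t) (ht : t < sSup {s | s ∈ Set.Ico 0 R ∧ g s < 0}) : g t < 0 := by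
  have hne : {s | s ∈ Set.Ico 0 R ∧ g s < 0}.Nonempty := by
    by_contra hempty
    rw [Set.not_nonempty_iff_eq_empty.mp hempty, Real.sSup_empty] at ht
    linarith
  obtain ⟨s, ⟨hsI, hgs⟩, hts⟩ := exists_lt_of_lt_csSup hne ht
  exact (hg ⟨ht₀, hts.trans hsI.2⟩ hsI hts.le).trans_lt hgs

theorem stmt_4_general (n : ℕ)
    (F' : EuclideanSpace ℝ (Fin n) →
      (EuclideanSpace ℝ (Fin n) →L[ℝ] EuclideanSpace ℝ (Fin n)))
    (xs : EuclideanSpace ℝ (Fin n))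
    (hinv : IsUnit (F' xs))
    (R : ℝ)
    (κ : ℝ)
    (f' : ℝ → ℝ)
    (h1b : f' 0 = -1)
    (h2 : StrictMonoOn f' (Set.Ico 0 R))
    (hmaj : ∀ τ ∈ Set.Icc (0:ℝ) 1, ∀ x ∈ Metric.ball xs κ,
      ‖(Ring.inverse (F' xs)).comp (F' x - F' (xs + τ • (x - xs)))‖ ≤
        f' ‖x - xs‖ - f' (τ * ‖x - xs‖))
    (ν : ℝ) (hν : ν = sSup {t | t ∈ Set.Ico 0 R ∧ f' t < 0}) :
    ∀ x ∈ Metric.ball xs (min κ ν),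
      IsUnit (F' x) ∧ ‖(Ring.inverse (F' x)).comp (F' xs)‖ ≤ 1 / |f' ‖x - xs‖| := by
  intro x hx
  have hxκ : x ∈ Metric.ball xs κ := Metric.ball_subset_ball (min_le_left _ _) hx
  have hxν : ‖x - xs‖ < ν := (mem_ball_iff_norm.mp hx).trans_le (min_le_right _ _)
  have hneg : f' ‖x - xs‖ < 0 := h2.monotoneOn.neg_of_lt_sSup_neg (norm_nonneg _) (hν ▸ hxν)
  have hclose : ‖Ring.inverse (F' xs) * (F' x - F' xs)‖ ≤ f' ‖x - xs‖ + 1 := by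
    have h := hmaj 0 (by simp) x hxκ
    rwa [zero_smul, add_zero, zero_mul, h1b, sub_neg_eq_add] at h
  obtain ⟨hunit, hbound⟩ :=
    ContinuousLinearMap.isUnit_and_norm_inverse_mul_le hinv (hclose.trans_lt (by linarith))
  refine ⟨hunit, hbound.trans ?_⟩
  rw [abs_of_neg hneg, one_div]
  exact inv_anti₀ (by linarith) (by linarith)

theorem stmt_4 (n : ℕ) (Ω : Set (EuclideanSpace ℝ (Fin n))) (hΩ : IsOpen Ω)
    (F : EuclideanSpace ℝ (Fin n) → EuclideanSpace ℝ (Fin n))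
    (F' : EuclideanSpace ℝ (Fin n) →
      (EuclideanSpace ℝ (Fin n) →L[ℝ] EuclideanSpace ℝ (Fin n)))
    (hFderiv : ∀ x ∈ Ω, HasFDerivAt F (F' x) x)
    (hFcont : ContinuousOn F' Ω)
    (xs : EuclideanSpace ℝ (Fin n)) (hxsΩ : xs ∈ Ω) (hFxs : F xs = 0)
    (hinv : IsUnit (F' xs))
    (R : ℝ) (hR : 0 < R)
    (κ : ℝ) (hκ : κ = sSup {t | t ∈ Set.Ico 0 R ∧ Metric.ball xs t ⊆ Ω})
    (f f' : ℝ → ℝ)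
    (hderiv : ∀ t ∈ Set.Ico 0 R, HasDerivWithinAt f (f' t) (Set.Ico 0 R) t)
    (hcont : ContinuousOn f' (Set.Ico 0 R))
    (h1a : f 0 = 0) (h1b : f' 0 = -1)
    (h2 : StrictMonoOn f' (Set.Ico 0 R))
    (hmaj : ∀ τ ∈ Set.Icc (0:ℝ) 1, ∀ x ∈ Metric.ball xs κ,
      ‖(Ring.inverse (F' xs)).comp (F' x - F' (xs + τ • (x - xs)))‖ ≤
        f' ‖x - xs‖ - f' (τ * ‖x - xs‖))
    (ν : ℝ) (hν : ν = sSup {t | t ∈ Set.Ico 0 R ∧ f' t < 0}) :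
    ∀ x ∈ Metric.ball xs (min κ ν),
      IsUnit (F' x) ∧ ‖(Ring.inverse (F' x)).comp (F' xs)‖ ≤ 1 / |f' ‖x - xs‖| :=
  stmt_4_general n F' xs hinv R κ f' h1b h2 hmaj ν hν
end

section
/- Let Ω ⊂ ℝⁿ be open, F : Ω → ℝⁿ continuously differentiable, x* ∈ Ω with F(x*) = 0 and F'(x*) invertible. Let R > 0, κ := sup{t ∈ [0, R) : B(x*, t) ⊂ Ω}, and suppose f : [0, R) → ℝ is continuously differentiable with f(0) = 0, f'(0) = −1, f' strictly increasing, and for all τ ∈ [0, 1] and all x ∈ B(x*, κ): ‖F'(x*)⁻¹[F'(x) − F'(x* + τ(x − x*))]‖ ≤ f'(‖x − x*‖) − f'(τ‖x − x*‖). Let ν := sup{t ∈ [0, R) : f'(t) < 0}. Then for every x ∈ B(x*, min{κ, ν}), F'(x) is invertible and ‖F'(x)⁻¹ F(x)‖ ≤ f(‖x − x*‖)/f'(‖x − x*‖). -/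
/-!
Let `A := F'(x*)`, `v := x - x*` and `t := ‖v‖`. The majorant condition at `τ = 0` gives
`‖1 - A⁻¹F'(x)‖ ≤ f'(t) + 1 < 1`, so by the Banach lemma `F'(x)` is invertible and
`‖(A⁻¹F'(x))⁻¹‖ ≤ -1/f'(t)`. Integrating the majorant condition along the segment `[x*, x]` bounds
the linearisation error `‖A⁻¹(F(x) - F'(x)v)‖` by `t f'(t) - f(t)`. Since
`F'(x)⁻¹F(x) = v + (A⁻¹F'(x))⁻¹ A⁻¹(F(x) - F'(x)v)`, we get
`‖F'(x)⁻¹F(x)‖ ≤ t + (t f'(t) - f(t))/(-f'(t)) = f(t)/f'(t)`.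
-/

open Set Metric
open scoped Ring

lemma exists_mem_gt_of_nonneg_lt_sSup {s : Set ℝ} {a : ℝ} (ha : 0 ≤ a) (h : a < sSup s) :
    ∃ b ∈ s, a < b := by
  rcases s.eq_empty_or_nonempty with rfl | hs
  · rw [Real.sSup_empty] at h
    exact absurd h ha.not_gt
  · exact exists_lt_of_lt_csSup hs h

lemma norm_inverse_le_of_norm_one_sub_lt_one {R : Type*} [NormedRing R] [HasSummableGeomSeries R]
    (h1 : ‖(1 : R)‖ ≤ 1) {a : R} (ha : ‖1 - a‖ < 1) : ‖a⁻¹ʳ‖ ≤ (1 - ‖1 - a‖)⁻¹ := by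
  have hunit : IsUnit a := by simpa using isUnit_one_sub_of_norm_lt_one ha
  have hid : a⁻¹ʳ = 1 + a⁻¹ʳ * (1 - a) := by
    rw [mul_sub, mul_one, Ring.inverse_mul_cancel a hunit]
    abel
  have hle : ‖a⁻¹ʳ‖ ≤ 1 + ‖a⁻¹ʳ‖ * ‖1 - a‖ :=
    calc ‖a⁻¹ʳ‖ = ‖1 + a⁻¹ʳ * (1 - a)‖ := congrArg _ hid
      _ ≤ ‖(1 : R)‖ + ‖a⁻¹ʳ‖ * ‖1 - a‖ :=
        (norm_add_le _ _).trans (by gcongr; exact norm_mul_le _ _)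
      _ ≤ 1 + ‖a⁻¹ʳ‖ * ‖1 - a‖ := by gcongr
  rw [← one_div, le_div_iff₀ (sub_pos.2 ha)]
  linarith

section NewtonStep

variable {𝕜 E : Type*} [NontriviallyNormedField 𝕜] [NormedAddCommGroup E] [NormedSpace 𝕜 E]
  [CompleteSpace E]

lemma isUnit_and_norm_inverse_apply_le {A T : E →L[𝕜] E} (hA : IsUnit A) {δ ε : ℝ}
    (hT : ‖1 - A⁻¹ʳ * T‖ ≤ δ) (hδ : δ < 1) {y v : E} (hy : ‖A⁻¹ʳ (y - T v)‖ ≤ ε) :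
    IsUnit T ∧ ‖T⁻¹ʳ y‖ ≤ ‖v‖ + ε / (1 - δ) := by
  set S := A⁻¹ʳ * T
  have hS : ‖1 - S‖ < 1 := hT.trans_lt hδ
  have hSunit : IsUnit S := by simpa using isUnit_one_sub_of_norm_lt_one hS
  have hTS : T = A * S := (Ring.mul_inverse_cancel_left A T hA).symm
  have hTinv : T⁻¹ʳ = S⁻¹ʳ * A⁻¹ʳ := by rw [hTS, Ring.inverse_mul (Or.inl hA)]
  have hsplit : T⁻¹ʳ y = v + S⁻¹ʳ (A⁻¹ʳ (y - T v)) := by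
    have hv : S⁻¹ʳ (A⁻¹ʳ (T v)) = v :=
      congrArg (fun M : E →L[𝕜] E => M v) (Ring.inverse_mul_cancel S hSunit)
    rw [hTinv]
    change S⁻¹ʳ (A⁻¹ʳ y) = _
    rw [map_sub, map_sub, hv]
    abel
  refine ⟨hTS ▸ hA.mul hSunit, ?_⟩
  have hSinv : ‖S⁻¹ʳ‖ ≤ (1 - δ)⁻¹ :=
    (norm_inverse_le_of_norm_one_sub_lt_one ContinuousLinearMap.norm_id_le hS).trans (by gcongr)
  calc ‖T⁻¹ʳ y‖ ≤ ‖v‖ + ‖S⁻¹ʳ‖ * ‖A⁻¹ʳ (y - T v)‖ := by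
        rw [hsplit]
        exact (norm_add_le _ _).trans (by gcongr; exact S⁻¹ʳ.le_opNorm _)
    _ ≤ ‖v‖ + (1 - δ)⁻¹ * ε := by gcongr
    _ = ‖v‖ + ε / (1 - δ) := by rw [inv_mul_eq_div]

end NewtonStep

lemma norm_sub_sub_fderiv_le_of_majorant {E G : Type*} [NormedAddCommGroup E] [NormedSpace ℝ E]
    [NormedAddCommGroup G] [NormedSpace ℝ G] {F : E → G} {F' : E → E →L[ℝ] G} {x₀ x : E}
    (hF : ∀ y ∈ segment ℝ x₀ x, HasFDerivAt F (F' y) y) {f f' : ℝ → ℝ}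
    (hf : ∀ s ∈ Icc 0 ‖x - x₀‖, HasDerivWithinAt f (f' s) (Icc 0 ‖x - x₀‖) s)
    (hmaj : ∀ τ ∈ Ico (0 : ℝ) 1,
      ‖F' x - F' (x₀ + τ • (x - x₀))‖ ≤ f' ‖x - x₀‖ - f' (τ * ‖x - x₀‖)) :
    ‖F x - F x₀ - F' x (x - x₀)‖ ≤ ‖x - x₀‖ * f' ‖x - x₀‖ - (f ‖x - x₀‖ - f 0) := by
  set v := x - x₀
  set t := ‖v‖
  have hg : ∀ τ ∈ Icc (0 : ℝ) 1, HasDerivAt (fun τ : ℝ => F (x₀ + τ • v) - F x₀ - τ • F' x v)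
      (F' (x₀ + τ • v) v - F' x v) τ := by
    intro τ hτ
    have hγ : HasDerivAt (fun τ : ℝ => x₀ + τ • v) v τ := by
      simpa using ((hasDerivAt_id τ).smul_const v).const_add x₀
    have hmem : x₀ + τ • v ∈ segment ℝ x₀ x := segment_eq_image' ℝ x₀ x ▸ mem_image_of_mem _ hτ
    exact (((hF _ hmem).comp_hasDerivAt τ hγ).sub_const (F x₀)).sub
      (by simpa using (hasDerivAt_id τ).smul_const (F' x v))
  have hmaps : MapsTo (· * t) (Icc (0 : ℝ) 1) (Icc 0 t) := fun τ hτ =>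
    ⟨mul_nonneg hτ.1 (norm_nonneg _), mul_le_of_le_one_left (norm_nonneg _) hτ.2⟩
  have hB : ∀ τ ∈ Icc (0 : ℝ) 1, HasDerivWithinAt (fun τ => τ * (t * f' t) - (f (τ * t) - f 0))
      (t * f' t - f' (τ * t) * t) (Icc 0 1) τ := fun τ hτ =>
    (hasDerivAt_mul_const _).hasDerivWithinAt.sub
      (((hf _ (hmaps hτ)).comp τ (hasDerivAt_mul_const t).hasDerivWithinAt hmaps).sub_const _)
  have hbound : ∀ τ ∈ Ico (0 : ℝ) 1,
      ‖F' (x₀ + τ • v) v - F' x v‖ ≤ t * f' t - f' (τ * t) * t := by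
    intro τ hτ
    calc ‖F' (x₀ + τ • v) v - F' x v‖ = ‖(F' x - F' (x₀ + τ • v)) v‖ := by
          rw [norm_sub_rev, sub_apply]
      _ ≤ (f' t - f' (τ * t)) * t :=
        (ContinuousLinearMap.le_opNorm _ _).trans (by gcongr; exact hmaj τ hτ)
      _ = t * f' t - f' (τ * t) * t := by ring
  have key := image_norm_le_of_norm_deriv_right_le_deriv_boundary'
    (fun τ hτ => (hg τ hτ).continuousAt.continuousWithinAt)
    (fun τ hτ => (hg τ (Ico_subset_Icc_self hτ)).hasDerivWithinAt) (by simp)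
    (fun τ hτ => (hB τ hτ).continuousWithinAt)
    (fun τ hτ =>
      (hB τ (Ico_subset_Icc_self hτ)).mono_of_mem_nhdsWithin (Icc_mem_nhdsGE_of_mem hτ))
    hbound (right_mem_Icc.2 zero_le_one)
  simpa [v] using key

theorem stmt_5_general (n : ℕ) (Ω : Set (EuclideanSpace ℝ (Fin n)))
    (F : EuclideanSpace ℝ (Fin n) → EuclideanSpace ℝ (Fin n))
    (F' : EuclideanSpace ℝ (Fin n) →
      (EuclideanSpace ℝ (Fin n) →L[ℝ] EuclideanSpace ℝ (Fin n)))
    (hFderiv : ∀ x ∈ Ω, HasFDerivAt F (F' x) x)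
    (xs : EuclideanSpace ℝ (Fin n)) (hFxs : F xs = 0)
    (hinv : IsUnit (F' xs))
    (R : ℝ)
    (κ : ℝ) (hκ : κ = sSup {t | t ∈ Set.Ico 0 R ∧ Metric.ball xs t ⊆ Ω})
    (f f' : ℝ → ℝ)
    (hderiv : ∀ t ∈ Set.Ico 0 R, HasDerivWithinAt f (f' t) (Set.Ico 0 R) t)
    (h1a : f 0 = 0) (h1b : f' 0 = -1)
    (h2 : StrictMonoOn f' (Set.Ico 0 R))
    (hmaj : ∀ τ ∈ Set.Icc (0:ℝ) 1, ∀ x ∈ Metric.ball xs κ,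
      ‖(Ring.inverse (F' xs)).comp (F' x - F' (xs + τ • (x - xs)))‖ ≤
        f' ‖x - xs‖ - f' (τ * ‖x - xs‖))
    (ν : ℝ) (hν : ν = sSup {t | t ∈ Set.Ico 0 R ∧ f' t < 0}) :
    ∀ x ∈ Metric.ball xs (min κ ν),
      IsUnit (F' x) ∧ ‖(Ring.inverse (F' x)) (F x)‖ ≤ f ‖x - xs‖ / f' ‖x - xs‖ := by
  intro x hx
  set t := ‖x - xs‖
  have ht : 0 ≤ t := norm_nonneg _
  obtain ⟨htκ, htν⟩ : t < κ ∧ t < ν := by rwa [mem_ball, dist_eq_norm, lt_min_iff] at hx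
  have hxκ : x ∈ ball xs κ := by rwa [mem_ball, dist_eq_norm]
  obtain ⟨s, ⟨hs, hf's⟩, hts⟩ := exists_mem_gt_of_nonneg_lt_sSup ht (hν ▸ htν)
  have htR : t < R := hts.trans hs.2
  have hf't : f' t < 0 := (h2 ⟨ht, htR⟩ hs hts).trans hf's
  obtain ⟨r, ⟨-, hr⟩, htr⟩ := exists_mem_gt_of_nonneg_lt_sSup ht (hκ ▸ htκ)
  have hseg : segment ℝ xs x ⊆ Ω :=
    ((convex_ball xs r).segment_subset (mem_ball_self (ht.trans_lt htr))
      (by rwa [mem_ball, dist_eq_norm])).trans hr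
  set A := (F' xs)⁻¹ʳ
  have hT : ‖1 - A * F' x‖ ≤ f' t + 1 := by
    have h0 := hmaj 0 (left_mem_Icc.2 zero_le_one) x hxκ
    rwa [zero_smul, add_zero, zero_mul, h1b, sub_neg_eq_add, ContinuousLinearMap.comp_sub,
      ← ContinuousLinearMap.mul_def, ← ContinuousLinearMap.mul_def, Ring.inverse_mul_cancel _ hinv,
      norm_sub_rev] at h0
  have hlin : ‖A (F x - F' x (x - xs))‖ ≤ t * f' t - f t := by
    have h := norm_sub_sub_fderiv_le_of_majorant (F := fun y => A (F y))
      (F' := fun y => A.comp (F' y)) (fun y hy => A.hasFDerivAt.comp y (hFderiv y (hseg hy)))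
      (fun s hs => (hderiv s ⟨hs.1, hs.2.trans_lt htR⟩).mono (Icc_subset_Ico_right htR))
      (fun τ hτ => by
        simpa [← ContinuousLinearMap.comp_sub] using hmaj τ (Ico_subset_Icc_self hτ) x hxκ)
    simpa [hFxs, h1a] using h
  obtain ⟨hunit, hbound⟩ := isUnit_and_norm_inverse_apply_le hinv hT (by linarith) hlin
  refine ⟨hunit, hbound.trans_eq ?_⟩
  change t + _ = _
  field_simp [hf't.ne]
  ring

theorem stmt_5 (n : ℕ) (Ω : Set (EuclideanSpace ℝ (Fin n))) (hΩ : IsOpen Ω)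
    (F : EuclideanSpace ℝ (Fin n) → EuclideanSpace ℝ (Fin n))
    (F' : EuclideanSpace ℝ (Fin n) →
      (EuclideanSpace ℝ (Fin n) →L[ℝ] EuclideanSpace ℝ (Fin n)))
    (hFderiv : ∀ x ∈ Ω, HasFDerivAt F (F' x) x)
    (hFcont : ContinuousOn F' Ω)
    (xs : EuclideanSpace ℝ (Fin n)) (hxsΩ : xs ∈ Ω) (hFxs : F xs = 0)
    (hinv : IsUnit (F' xs))
    (R : ℝ) (hR : 0 < R)
    (κ : ℝ) (hκ : κ = sSup {t | t ∈ Set.Ico 0 R ∧ Metric.ball xs t ⊆ Ω})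
    (f f' : ℝ → ℝ)
    (hderiv : ∀ t ∈ Set.Ico 0 R, HasDerivWithinAt f (f' t) (Set.Ico 0 R) t)
    (hcont : ContinuousOn f' (Set.Ico 0 R))
    (h1a : f 0 = 0) (h1b : f' 0 = -1)
    (h2 : StrictMonoOn f' (Set.Ico 0 R))
    (hmaj : ∀ τ ∈ Set.Icc (0:ℝ) 1, ∀ x ∈ Metric.ball xs κ,
      ‖(Ring.inverse (F' xs)).comp (F' x - F' (xs + τ • (x - xs)))‖ ≤
        f' ‖x - xs‖ - f' (τ * ‖x - xs‖))
    (ν : ℝ) (hν : ν = sSup {t | t ∈ Set.Ico 0 R ∧ f' t < 0}) :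
    ∀ x ∈ Metric.ball xs (min κ ν),
      IsUnit (F' x) ∧ ‖(Ring.inverse (F' x)) (F x)‖ ≤ f ‖x - xs‖ / f' ‖x - xs‖ :=
  stmt_5_general n Ω F F' hFderiv xs hFxs hinv R κ hκ f f' hderiv h1a h1b h2 hmaj ν hν
end

section
/- Let Ω ⊂ ℝⁿ be open, F : Ω → ℝⁿ continuously differentiable, x* ∈ Ω with F(x*) = 0 and F'(x*) invertible. Let R > 0, κ := sup{t ∈ [0, R) : B(x*, t) ⊂ Ω}, and suppose f : [0, R) → ℝ is continuously differentiable with f(0) = 0, f'(0) = −1, f' strictly increasing, and for all τ ∈ [0, 1] and all x ∈ B(x*, κ): ‖F'(x*)⁻¹[F'(x) − F'(x* + τ(x − x*))]‖ ≤ f'(‖x − x*‖) − f'(τ‖x − x*‖). Let ν := sup{t ∈ [0, R) : f'(t) < 0}. Then for every x ∈ B(x*, min{κ, ν}): ‖F'(x*)⁻¹[F(x*) − F(x) − F'(x)(x* − x)]‖ ≤ f'(‖x − x*‖)‖x − x*‖ − f(‖x − x*‖). -/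
/-!
Along the segment `p τ = x* + τ (x - x*)` the fundamental theorem of calculus writes
`F(x*) - F(x) - F'(x)(x* - x)` as `∫₀¹ (F'(x) - F'(p τ)) (x - x*) dτ`. After applying `F'(x*)⁻¹`,
the majorant condition bounds the integrand by `(f'(r) - f'(τ r)) r` with `r = ‖x - x*‖`, and
`∫₀¹ (f'(r) - f'(τ r)) r dτ = f'(r) r - f(r)` because `f(0) = 0`.
-/

open Set MeasureTheory intervalIntegral

lemma exists_mem_lt_of_lt_sSup_of_nonneg {S : Set ℝ} {r : ℝ} (hr : 0 ≤ r) (h : r < sSup S) :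
    ∃ t ∈ S, r < t := by
  by_contra! hle
  exact (Real.sSup_le hle hr).not_gt h

section Segment

variable {E G : Type*} [NormedAddCommGroup E] [NormedSpace ℝ E]
  [NormedAddCommGroup G] [NormedSpace ℝ G]
  {F : E → G} {F' : E → E →L[ℝ] G} {s : Set E} {a x : E}

lemma add_smul_sub_mem_of_segment_subset (hs : segment ℝ a x ⊆ s) {τ : ℝ}
    (hτ : τ ∈ Icc (0 : ℝ) 1) : a + τ • (x - a) ∈ s :=
  hs (segment_eq_image' ℝ a x ▸ mem_image_of_mem _ hτ)

lemma ContinuousOn.comp_segment (hF' : ContinuousOn F' s) (hs : segment ℝ a x ⊆ s) :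
    ContinuousOn (fun τ : ℝ ↦ F' (a + τ • (x - a))) (Icc 0 1) :=
  hF'.comp (by fun_prop) fun _ hτ ↦ add_smul_sub_mem_of_segment_subset hs hτ

lemma ContinuousOn.intervalIntegrable_segment (hF' : ContinuousOn F' s)
    (hs : segment ℝ a x ⊆ s) :
    IntervalIntegrable (fun τ : ℝ ↦ F' (a + τ • (x - a)) (x - a)) volume 0 1 :=
  ((hF'.comp_segment hs).clm_apply continuousOn_const).intervalIntegrable_of_Icc zero_le_one

variable [CompleteSpace G]

lemma integral_fderiv_segment_eq_sub (hF : ∀ z ∈ s, HasFDerivAt F (F' z) z)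
    (hF' : ContinuousOn F' s) (hs : segment ℝ a x ⊆ s) :
    ∫ τ in (0 : ℝ)..1, F' (a + τ • (x - a)) (x - a) = F x - F a := by
  have hpath (τ : ℝ) : HasDerivAt (fun σ : ℝ ↦ a + σ • (x - a)) (x - a) τ := by
    simpa using ((hasDerivAt_id τ).smul_const (x - a)).const_add a
  have hderiv : ∀ τ ∈ uIcc (0 : ℝ) 1,
      HasDerivAt (fun σ ↦ F (a + σ • (x - a))) (F' (a + τ • (x - a)) (x - a)) τ := by
    intro τ hτ
    rw [uIcc_of_le zero_le_one] at hτ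
    exact (hF _ (add_smul_sub_mem_of_segment_subset hs hτ)).comp_hasDerivAt τ (hpath τ)
  simpa using integral_eq_sub_of_hasDerivAt hderiv (hF'.intervalIntegrable_segment hs)

theorem norm_sub_sub_fderiv_apply_le (hF : ∀ z ∈ s, HasFDerivAt F (F' z) z)
    (hF' : ContinuousOn F' s) (hs : segment ℝ a x ⊆ s) {g : ℝ → ℝ}
    (hg : IntervalIntegrable g volume 0 1)
    (hbound : ∀ τ ∈ Icc (0 : ℝ) 1, ‖F' x - F' (a + τ • (x - a))‖ ≤ g τ) :
    ‖F a - F x - F' x (a - x)‖ ≤ (∫ τ in (0 : ℝ)..1, g τ) * ‖x - a‖ := by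
  have hcont : ContinuousOn (fun τ : ℝ ↦ (F' x - F' (a + τ • (x - a))) (x - a)) (Icc 0 1) :=
    (continuousOn_const.sub (hF'.comp_segment hs)).clm_apply continuousOn_const
  have hrepr : F a - F x - F' x (a - x) =
      ∫ τ in (0 : ℝ)..1, (F' x - F' (a + τ • (x - a))) (x - a) := by
    simp only [sub_apply]
    rw [integral_sub intervalIntegrable_const (hF'.intervalIntegrable_segment hs),
      integral_fderiv_segment_eq_sub hF hF' hs, intervalIntegral.integral_const,
      ← neg_sub x a, map_neg]
    simp only [sub_zero, one_smul]
    abel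
  calc ‖F a - F x - F' x (a - x)‖
      ≤ ∫ τ in (0 : ℝ)..1, ‖(F' x - F' (a + τ • (x - a))) (x - a)‖ := by
        rw [hrepr]
        exact norm_integral_le_integral_norm zero_le_one
    _ ≤ ∫ τ in (0 : ℝ)..1, g τ * ‖x - a‖ :=
        integral_mono_on zero_le_one (hcont.norm.intervalIntegrable_of_Icc zero_le_one)
          (hg.mul_const _) fun τ hτ ↦
            (ContinuousLinearMap.le_opNorm _ _).trans
              (mul_le_mul_of_nonneg_right (hbound τ hτ) (norm_nonneg _))
    _ = (∫ τ in (0 : ℝ)..1, g τ) * ‖x - a‖ := integral_mul_const _ _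

end Segment

section Majorant

variable {f f' : ℝ → ℝ} {R r : ℝ}

lemma intervalIntegrable_comp_mul_of_continuousOn_Ico (hf' : ContinuousOn f' (Ico 0 R))
    (hr : 0 ≤ r) (hrR : r < R) : IntervalIntegrable (fun τ ↦ f' (τ * r)) volume 0 1 := by
  refine (hf'.comp (by fun_prop) fun τ hτ ↦ ⟨?_, ?_⟩).intervalIntegrable_of_Icc zero_le_one
  · exact mul_nonneg hτ.1 hr
  · exact (mul_le_of_le_one_left hr hτ.2).trans_lt hrR

lemma integral_comp_mul_mul_eq_sub (hf : ∀ t ∈ Ico 0 R, HasDerivWithinAt f (f' t) (Ico 0 R) t)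
    (hf' : ContinuousOn f' (Ico 0 R)) (hr : 0 ≤ r) (hrR : r < R) :
    (∫ τ in (0 : ℝ)..1, f' (τ * r)) * r = f r - f 0 := by
  have hsub : Icc 0 r ⊆ Ico 0 R := Icc_subset_Ico_right hrR
  rw [mul_comm, ← smul_eq_mul, smul_integral_comp_mul_right, zero_mul, one_mul]
  refine integral_eq_sub_of_hasDeriv_right_of_le hr
    (fun t ht ↦ (hf t (hsub ht)).continuousWithinAt.mono hsub) (fun t ht ↦ ?_)
    ((hf'.mono hsub).intervalIntegrable_of_Icc hr)
  exact ((hf t (hsub (Ioo_subset_Icc_self ht))).hasDerivAt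
    (Ico_mem_nhds ht.1 (ht.2.trans hrR))).hasDerivWithinAt

lemma integral_majorant_gap_mul_eq (hf : ∀ t ∈ Ico 0 R, HasDerivWithinAt f (f' t) (Ico 0 R) t)
    (hf' : ContinuousOn f' (Ico 0 R)) (h0 : f 0 = 0) (hr : 0 ≤ r) (hrR : r < R) :
    (∫ τ in (0 : ℝ)..1, (f' r - f' (τ * r))) * r = f' r * r - f r := by
  rw [integral_sub intervalIntegrable_const
    (intervalIntegrable_comp_mul_of_continuousOn_Ico hf' hr hrR),
    intervalIntegral.integral_const, sub_mul, integral_comp_mul_mul_eq_sub hf hf' hr hrR, h0]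
  simp

end Majorant

theorem stmt_6_general (n : ℕ) (Ω : Set (EuclideanSpace ℝ (Fin n)))
    (F : EuclideanSpace ℝ (Fin n) → EuclideanSpace ℝ (Fin n))
    (F' : EuclideanSpace ℝ (Fin n) →
      (EuclideanSpace ℝ (Fin n) →L[ℝ] EuclideanSpace ℝ (Fin n)))
    (hFderiv : ∀ x ∈ Ω, HasFDerivAt F (F' x) x)
    (hFcont : ContinuousOn F' Ω)
    (xs : EuclideanSpace ℝ (Fin n))
    (R : ℝ)
    (κ : ℝ) (hκ : κ = sSup {t | t ∈ Set.Ico 0 R ∧ Metric.ball xs t ⊆ Ω})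
    (f f' : ℝ → ℝ)
    (hderiv : ∀ t ∈ Set.Ico 0 R, HasDerivWithinAt f (f' t) (Set.Ico 0 R) t)
    (hcont : ContinuousOn f' (Set.Ico 0 R))
    (h1a : f 0 = 0)
    (hmaj : ∀ τ ∈ Set.Icc (0:ℝ) 1, ∀ x ∈ Metric.ball xs κ,
      ‖(Ring.inverse (F' xs)).comp (F' x - F' (xs + τ • (x - xs)))‖ ≤
        f' ‖x - xs‖ - f' (τ * ‖x - xs‖))
    (ν : ℝ) :
    ∀ x ∈ Metric.ball xs (min κ ν),
      ‖(Ring.inverse (F' xs)) (F xs - F x - (F' x) (xs - x))‖ ≤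
        f' ‖x - xs‖ * ‖x - xs‖ - f ‖x - xs‖ := by
  intro x hx
  set A := Ring.inverse (F' xs)
  have hr : 0 ≤ ‖x - xs‖ := norm_nonneg _
  have hxκ : x ∈ Metric.ball xs κ := Metric.ball_subset_ball (min_le_left _ _) hx
  obtain ⟨t, ⟨⟨-, htR⟩, hball⟩, hrt⟩ :=
    exists_mem_lt_of_lt_sSup_of_nonneg hr (hκ ▸ mem_ball_iff_norm.mp hxκ)
  have hrR : ‖x - xs‖ < R := hrt.trans htR
  have hseg : segment ℝ xs x ⊆ Ω :=
    ((convex_ball xs t).segment_subset (Metric.mem_ball_self (hr.trans_lt hrt))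
      (mem_ball_iff_norm.mpr hrt)).trans hball
  have hAF (z) (hz : z ∈ Ω) : HasFDerivAt (A ∘ F) (A.comp (F' z)) z :=
    A.hasFDerivAt.comp z (hFderiv z hz)
  have hrem := norm_sub_sub_fderiv_apply_le hAF (continuousOn_const.clm_comp hFcont) hseg
    (intervalIntegrable_const.sub
      (intervalIntegrable_comp_mul_of_continuousOn_Ico hcont hr hrR))
    fun τ hτ ↦ by rw [← ContinuousLinearMap.comp_sub]; exact hmaj τ hτ x hxκ
  rw [integral_majorant_gap_mul_eq hderiv hcont h1a hr hrR] at hrem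
  simpa using hrem

theorem stmt_6 (n : ℕ) (Ω : Set (EuclideanSpace ℝ (Fin n))) (hΩ : IsOpen Ω)
    (F : EuclideanSpace ℝ (Fin n) → EuclideanSpace ℝ (Fin n))
    (F' : EuclideanSpace ℝ (Fin n) →
      (EuclideanSpace ℝ (Fin n) →L[ℝ] EuclideanSpace ℝ (Fin n)))
    (hFderiv : ∀ x ∈ Ω, HasFDerivAt F (F' x) x)
    (hFcont : ContinuousOn F' Ω)
    (xs : EuclideanSpace ℝ (Fin n)) (hxsΩ : xs ∈ Ω) (hFxs : F xs = 0)
    (hinv : IsUnit (F' xs))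
    (R : ℝ) (hR : 0 < R)
    (κ : ℝ) (hκ : κ = sSup {t | t ∈ Set.Ico 0 R ∧ Metric.ball xs t ⊆ Ω})
    (f f' : ℝ → ℝ)
    (hderiv : ∀ t ∈ Set.Ico 0 R, HasDerivWithinAt f (f' t) (Set.Ico 0 R) t)
    (hcont : ContinuousOn f' (Set.Ico 0 R))
    (h1a : f 0 = 0) (h1b : f' 0 = -1)
    (h2 : StrictMonoOn f' (Set.Ico 0 R))
    (hmaj : ∀ τ ∈ Set.Icc (0:ℝ) 1, ∀ x ∈ Metric.ball xs κ,
      ‖(Ring.inverse (F' xs)).comp (F' x - F' (xs + τ • (x - xs)))‖ ≤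
        f' ‖x - xs‖ - f' (τ * ‖x - xs‖))
    (ν : ℝ) (hν : ν = sSup {t | t ∈ Set.Ico 0 R ∧ f' t < 0}) :
    ∀ x ∈ Metric.ball xs (min κ ν),
      ‖(Ring.inverse (F' xs)) (F xs - F x - (F' x) (xs - x))‖ ≤
        f' ‖x - xs‖ * ‖x - xs‖ - f ‖x - xs‖ :=
  stmt_6_general n Ω F F' hFderiv hFcont xs R κ hκ f f' hderiv hcont h1a hmaj ν
end

section
/- Let C ⊂ ℝⁿ be a nonempty convex compact set, let y, ỹ ∈ ℝⁿ, let ε ≥ 0, and let z, z̃ ∈ C satisfy the (in)exact optimality conditions of the conditional gradient procedure: ⟨z − y, u − z⟩ ≥ −ε for all u ∈ C, and ⟨z̃ − ỹ, u − z̃⟩ ≥ 0 for all u ∈ C. Then ‖z − z̃‖ ≤ ‖y − ỹ‖ + √(2ε). -/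
/-!
Testing the optimality condition of `z` at `z̃` and that of `z̃` at `z` and adding the two
inequalities gives `‖z - z̃‖² ≤ ⟪y - ỹ, z - z̃⟫ + ε ≤ ‖y - ỹ‖ ‖z - z̃‖ + ε`, a quadratic
inequality in `‖z - z̃‖` whose solutions satisfy `‖z - z̃‖ ≤ ‖y - ỹ‖ + √ε`.
-/

open scoped RealInnerProductSpace

theorem Real.le_add_sqrt_of_sq_le_mul_add {a t ε : ℝ} (ha : 0 ≤ a) (h : t ^ 2 ≤ a * t + ε) :
    t ≤ a + √ε := by
  by_contra! hlt
  have hε : ε ≤ √ε ^ 2 := Real.sq_sqrt' ▸ le_max_left ε 0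
  nlinarith [Real.sqrt_nonneg ε]

theorem Real.sqrt_le_sqrt_two_mul (ε : ℝ) : √ε ≤ √(2 * ε) := by
  rw [Real.sqrt_mul zero_le_two]
  exact le_mul_of_one_le_left (Real.sqrt_nonneg ε) (Real.one_le_sqrt.mpr one_le_two)

section InnerProductSpace

variable {E : Type*} [NormedAddCommGroup E] [InnerProductSpace ℝ E]

theorem norm_sub_sq_le_inner_add_of_variational {y yt z zt : E} {ε : ℝ}
    (h : -ε ≤ ⟪z - y, zt - z⟫) (h' : 0 ≤ ⟪zt - yt, z - zt⟫) :
    ‖z - zt‖ ^ 2 ≤ ⟪y - yt, z - zt⟫ + ε := by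
  have hsplit : ‖z - zt‖ ^ 2 - ⟪y - yt, z - zt⟫ = -⟪z - y, zt - z⟫ - ⟪zt - yt, z - zt⟫ := by
    rw [← real_inner_self_eq_norm_sq]
    simp only [inner_sub_left, inner_sub_right]
    ring
  linarith

theorem norm_sub_le_norm_sub_add_sqrt_of_variational {y yt z zt : E} {ε : ℝ}
    (h : -ε ≤ ⟪z - y, zt - z⟫) (h' : 0 ≤ ⟪zt - yt, z - zt⟫) :
    ‖z - zt‖ ≤ ‖y - yt‖ + √ε := by
  refine Real.le_add_sqrt_of_sq_le_mul_add (norm_nonneg _) ?_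
  calc ‖z - zt‖ ^ 2 ≤ ⟪y - yt, z - zt⟫ + ε := norm_sub_sq_le_inner_add_of_variational h h'
    _ ≤ ‖y - yt‖ * ‖z - zt‖ + ε := by gcongr; exact real_inner_le_norm _ _

end InnerProductSpace

theorem stmt_7_general (n : ℕ) (C : Set (EuclideanSpace ℝ (Fin n)))
    (y yt : EuclideanSpace ℝ (Fin n)) (ε : ℝ)
    (z zt : EuclideanSpace ℝ (Fin n)) (hz : z ∈ C) (hzt : zt ∈ C)
    (hopt : ∀ u ∈ C, ⟪z - y, u - z⟫ ≥ -ε)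
    (hopt' : ∀ u ∈ C, ⟪zt - yt, u - zt⟫ ≥ 0) :
    ‖z - zt‖ ≤ ‖y - yt‖ + Real.sqrt (2 * ε) :=
  (norm_sub_le_norm_sub_add_sqrt_of_variational (hopt zt hzt) (hopt' z hz)).trans
    (add_le_add_right (Real.sqrt_le_sqrt_two_mul ε) _)

theorem stmt_7 (n : ℕ) (C : Set (EuclideanSpace ℝ (Fin n)))
    (hCne : C.Nonempty) (hCconv : Convex ℝ C) (hCcomp : IsCompact C)
    (y yt : EuclideanSpace ℝ (Fin n)) (ε : ℝ) (hε : 0 ≤ ε)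
    (z zt : EuclideanSpace ℝ (Fin n)) (hz : z ∈ C) (hzt : zt ∈ C)
    (hopt : ∀ u ∈ C, ⟪z - y, u - z⟫ ≥ -ε)
    (hopt' : ∀ u ∈ C, ⟪zt - yt, u - zt⟫ ≥ 0) :
    ‖z - zt‖ ≤ ‖y - yt‖ + Real.sqrt (2 * ε) :=
  stmt_7_general n C y yt ε z zt hz hzt hopt hopt'
end

section
/- Let Ω ⊂ ℝⁿ be open, C ⊂ Ω a nonempty convex compact set, F : Ω → ℝⁿ continuously differentiable, x* ∈ C with F(x*) = 0 and F'(x*) invertible, and let f, κ, ν, n_f, ϑ, ω₁, ω₂, λ, ρ, σ be as in the majorant setting. Let x ∈ C ∩ B(x*, σ) with x ≠ x*. Let M be an invertible n×n matrix with ‖M⁻¹F'(x)‖ ≤ ω₁ and ‖M⁻¹F'(x) − I‖ ≤ ω₂; let P be an invertible matrix, η ≥ 0, and r ∈ ℝⁿ with ‖P r‖ ≤ η‖P F(x)‖ and η·‖(P F'(x))⁻¹‖·‖P F'(x)‖ ≤ ϑ; let θ ≥ 0. Then ‖x − M⁻¹(F(x) − r) − x*‖ + √(2θ)·‖M⁻¹(F(x)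 − r)‖ ≤ ω₁(1+ϑ)(1+√(2θ))|n_f(‖x − x*‖)| + (ω₁[(1+ϑ)√(2θ) + ϑ] + ω₂)‖x − x*‖. -/
/-!
Let `e = x - x*` and `s = ‖e‖`; since `s < ρ ≤ ν`, `f'(s) < 0`. Integrating the majorant
condition along the segment `[x*, x]` (a fencing argument against `τ ↦ τ s f'(s) - f(τ s)`)
bounds the linearization error `‖F'(x*)⁻¹ (F'(x) e - F(x))‖` by `s f'(s) - f(s)`, and the
Banach perturbation lemma gives `‖F'(x)⁻¹ v‖ ≤ ‖F'(x*)⁻¹ v‖ / |f'(s)|`, so the exact Newton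
step `u = F'(x)⁻¹ F(x)` satisfies `‖e - u‖ ≤ |n_f(s)|`. Writing `r = F'(x) (P F'(x))⁻¹ P r`, the
relative residual bound gives `‖M⁻¹ r‖ ≤ ω₁ ϑ ‖u‖`. Finally the inexact step
`d = M⁻¹ F'(x) u - M⁻¹ r` satisfies `e - d = (I - M⁻¹ F'(x)) e + M⁻¹ F'(x) (e - u) + M⁻¹ r`,
where `‖u‖ ≤ s + |n_f(s)|`.
-/

open Set

theorem exists_mem_lt_of_nonneg_lt_sSup {S : Set ℝ} {s : ℝ} (hs : 0 ≤ s) (h : s < sSup S) :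
    ∃ t ∈ S, s < t := by
  rcases S.eq_empty_or_nonempty with rfl | hS
  · rw [Real.sSup_empty] at h
    exact absurd hs h.not_ge
  · exact exists_lt_of_lt_csSup hS h

namespace ContinuousLinearMap

variable {𝕜 E : Type*} [NontriviallyNormedField 𝕜] [NormedAddCommGroup E] [NormedSpace 𝕜 E]

theorem ringInverse_apply_apply {X : E →L[𝕜] E} (hX : IsUnit X) (v : E) :
    Ring.inverse X (X v) = v := by
  rw [← mul_apply_eq_comp, Ring.inverse_mul_cancel X hX, one_apply_eq_self]

theorem apply_ringInverse_apply {X : E →L[𝕜] E} (hX : IsUnit X) (v : E) :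
    X (Ring.inverse X v) = v := by
  rw [← mul_apply_eq_comp, Ring.mul_inverse_cancel X hX, one_apply_eq_self]

variable [CompleteSpace E]

theorem norm_ringInverse_one_sub_le {t : E →L[𝕜] E} (ht : ‖t‖ < 1) :
    ‖Ring.inverse (1 - t)‖ ≤ (1 - ‖t‖)⁻¹ := by
  have h1 : ‖(1 : E →L[𝕜] E)‖ ≤ 1 := norm_id_le
  have := tsum_geometric_le_of_norm_lt_one t ht
  rw [geom_series_eq_inverse t ht] at this
  linarith

theorem isUnit_and_norm_ringInverse_apply_le {A X : E →L[𝕜] E} (hA : IsUnit A) {a : ℝ}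
    (ha : a < 1) (hX : ‖(Ring.inverse A).comp (X - A)‖ ≤ a) :
    IsUnit X ∧ ∀ v, ‖Ring.inverse X v‖ ≤ (1 - a)⁻¹ * ‖Ring.inverse A v‖ := by
  obtain ⟨A, rfl⟩ := hA
  set t : E →L[𝕜] E := -((Ring.inverse (A : E →L[𝕜] E)).comp (X - (A : E →L[𝕜] E)))
  have ht : ‖t‖ ≤ a := by rwa [norm_neg]
  have ht1 : ‖t‖ < 1 := ht.trans_lt ha
  have hX_eq : X = ↑(A * Units.oneSub t ht1) := by
    simp only [Units.val_mul, Units.val_oneSub, t, Ring.inverse_unit, sub_neg_eq_add, mul_add,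
      mul_one, ← mul_def, ← mul_assoc, Units.mul_inv, one_mul, add_sub_cancel]
  refine ⟨hX_eq ▸ Units.isUnit _, fun v => ?_⟩
  have hinv : Ring.inverse X = Ring.inverse (1 - t) * Ring.inverse (A : E →L[𝕜] E) := by
    rw [hX_eq, Ring.inverse_unit, mul_inv_rev, Units.val_mul, ← Units.val_oneSub t ht1,
      ← Ring.inverse_unit, ← Ring.inverse_unit]
  calc ‖Ring.inverse X v‖ ≤ ‖Ring.inverse (1 - t)‖ * ‖Ring.inverse (A : E →L[𝕜] E) v‖ := by
        rw [hinv, mul_apply_eq_comp]; exact le_opNorm _ _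
    _ ≤ (1 - a)⁻¹ * ‖Ring.inverse (A : E →L[𝕜] E) v‖ := by
        gcongr
        exact (norm_ringInverse_one_sub_le ht1).trans
          (inv_anti₀ (by linarith) (by linarith))

end ContinuousLinearMap

section Majorant

variable {E G H : Type*} [NormedAddCommGroup E] [NormedSpace ℝ E] [NormedAddCommGroup G]
  [NormedSpace ℝ G] [NormedAddCommGroup H] [NormedSpace ℝ H]

theorem norm_linearization_error_le_of_majorant {F : E → G} {F' : E → E →L[ℝ] G}
    {A : G →L[ℝ] H} {x₀ x : E}
    (hF : ∀ τ ∈ Icc (0 : ℝ) 1,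
      HasFDerivAt F (F' (x₀ + τ • (x - x₀))) (x₀ + τ • (x - x₀)))
    {f f' : ℝ → ℝ} {R : ℝ} (hf : ∀ t ∈ Ico 0 R, HasDerivWithinAt f (f' t) (Ico 0 R) t)
    (hf0 : f 0 = 0) (hxR : ‖x - x₀‖ < R)
    (hmaj : ∀ τ ∈ Icc (0 : ℝ) 1,
      ‖A.comp (F' x - F' (x₀ + τ • (x - x₀)))‖ ≤ f' ‖x - x₀‖ - f' (τ * ‖x - x₀‖)) :
    ‖A (F' x (x - x₀) - (F x - F x₀))‖ ≤ ‖x - x₀‖ * f' ‖x - x₀‖ - f ‖x - x₀‖ := by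
  set e := x - x₀
  set s := ‖e‖
  have hs : 0 ≤ s := norm_nonneg e
  have hmaps : MapsTo (· * s) (Icc (0 : ℝ) 1) (Ico 0 R) := fun τ hτ =>
    ⟨mul_nonneg hτ.1 hs, (mul_le_of_le_one_left hs hτ.2).trans_lt hxR⟩
  let g : ℝ → H := fun τ => A (τ • F' x e - (F (x₀ + τ • e) - F x₀))
  let g' : ℝ → H := fun τ => A.comp (F' x - F' (x₀ + τ • e)) e
  let B : ℝ → ℝ := fun τ => τ * (s * f' s) - f (τ * s)
  have hg : ∀ τ ∈ Icc (0 : ℝ) 1, HasDerivAt g (g' τ) τ := by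
    intro τ hτ
    have hpath : HasDerivAt (fun σ : ℝ => x₀ + σ • e) e τ := by
      simpa using ((hasDerivAt_id τ).smul_const e).const_add x₀
    have hFpath := (((hF τ hτ).comp_hasDerivAt τ hpath).sub_const (F x₀))
    exact (A.hasFDerivAt.comp_hasDerivAt τ
      (((hasDerivAt_id τ).smul_const (F' x e)).sub hFpath)).congr_deriv (by simp [g'])
  have hB : ∀ τ ∈ Ico (0 : ℝ) 1,
      HasDerivWithinAt B (s * f' s - f' (τ * s) * s) (Ici τ) τ := by
    intro τ hτ
    have hτs := hmaps (Ico_subset_Icc_self hτ)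
    have hfτ : HasDerivWithinAt f (f' (τ * s)) (Ici (τ * s)) (τ * s) :=
      (hf _ hτs).mono_of_mem_nhdsWithin
        (Filter.mem_of_superset (Ico_mem_nhdsGE hτs.2) (Ico_subset_Ico_left hτs.1))
    exact (hasDerivAt_mul_const (s * f' s)).hasDerivWithinAt.sub
      (hfτ.comp τ (hasDerivAt_mul_const s).hasDerivWithinAt
        fun σ hσ => mul_le_mul_of_nonneg_right hσ hs)
  have hfc : ContinuousOn f (Ico 0 R) := fun t ht => (hf t ht).continuousWithinAt
  have hBc : ContinuousOn B (Icc 0 1) :=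
    (continuous_mul_const _).continuousOn.sub (hfc.comp (continuous_mul_const s).continuousOn hmaps)
  have hbound : ∀ τ ∈ Ico (0 : ℝ) 1, ‖g' τ‖ ≤ s * f' s - f' (τ * s) * s := fun τ hτ =>
    calc ‖g' τ‖ ≤ ‖A.comp (F' x - F' (x₀ + τ • e))‖ * s := (A.comp _).le_opNorm e
      _ ≤ (f' s - f' (τ * s)) * s := by gcongr; exact hmaj τ (Ico_subset_Icc_self hτ)
      _ = s * f' s - f' (τ * s) * s := by ring
  have key := image_norm_le_of_norm_deriv_right_le_deriv_boundary'
    (fun τ hτ => (hg τ hτ).continuousAt.continuousWithinAt)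
    (fun τ hτ => (hg τ (Ico_subset_Icc_self hτ)).hasDerivWithinAt)
    (by simp [g, B, hf0]) hBc hB hbound (right_mem_Icc.mpr zero_le_one)
  simpa [g, B, e] using key

end Majorant

section Newton

variable {E : Type*} [NormedAddCommGroup E] [NormedSpace ℝ E] [CompleteSpace E]

theorem isUnit_and_norm_sub_newton_step_le_of_majorant {F : E → E} {F' : E → E →L[ℝ] E}
    {x₀ x : E}
    (hF : ∀ τ ∈ Icc (0 : ℝ) 1,
      HasFDerivAt F (F' (x₀ + τ • (x - x₀))) (x₀ + τ • (x - x₀)))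
    (hFx₀ : F x₀ = 0) (hinv : IsUnit (F' x₀))
    {f f' : ℝ → ℝ} {R : ℝ} (hf : ∀ t ∈ Ico 0 R, HasDerivWithinAt f (f' t) (Ico 0 R) t)
    (hf0 : f 0 = 0) (hf'0 : f' 0 = -1) (hxR : ‖x - x₀‖ < R) (hf's : f' ‖x - x₀‖ < 0)
    (hmaj : ∀ τ ∈ Icc (0 : ℝ) 1,
      ‖(Ring.inverse (F' x₀)).comp (F' x - F' (x₀ + τ • (x - x₀)))‖ ≤
        f' ‖x - x₀‖ - f' (τ * ‖x - x₀‖)) :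
    IsUnit (F' x) ∧
      ‖x - x₀ - Ring.inverse (F' x) (F x)‖ ≤ |‖x - x₀‖ - f ‖x - x₀‖ / f' ‖x - x₀‖| := by
  set s := ‖x - x₀‖
  have hmaj₀ : ‖(Ring.inverse (F' x₀)).comp (F' x - F' x₀)‖ ≤ f' s + 1 := by
    simpa [hf'0] using hmaj 0 (left_mem_Icc.mpr zero_le_one)
  obtain ⟨hX, hXinv⟩ :=
    ContinuousLinearMap.isUnit_and_norm_ringInverse_apply_le hinv (by linarith) hmaj₀
  have hlin := norm_linearization_error_le_of_majorant hF hf hf0 hxR hmaj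
  rw [hFx₀, sub_zero] at hlin
  refine ⟨hX, ?_⟩
  calc ‖x - x₀ - Ring.inverse (F' x) (F x)‖
      = ‖Ring.inverse (F' x) (F' x (x - x₀) - F x)‖ := by
        rw [map_sub, ContinuousLinearMap.ringInverse_apply_apply hX]
    _ ≤ (1 - (f' s + 1))⁻¹ * ‖Ring.inverse (F' x₀) (F' x (x - x₀) - F x)‖ := hXinv _
    _ ≤ (-f' s)⁻¹ * (s * f' s - f s) := by
        rw [show 1 - (f' s + 1) = -f' s by ring]
        gcongr
        exact inv_nonneg.mpr (neg_nonneg.mpr hf's.le)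
    _ = -(s - f s / f' s) := by field_simp [hf's.ne]
    _ ≤ |s - f s / f' s| := neg_le_abs _

end Newton

section InexactStep

variable {𝕜 E : Type*} [NontriviallyNormedField 𝕜] [NormedAddCommGroup E] [NormedSpace 𝕜 E]

theorem norm_apply_le_of_relative_residual_le {N P X : E →L[𝕜] E} (hP : IsUnit P)
    (hX : IsUnit X) {b r : E} {η ϑ ω : ℝ} (hη : 0 ≤ η) (hr : ‖P r‖ ≤ η * ‖P b‖)
    (hcond : η * (‖Ring.inverse (P.comp X)‖ * ‖P.comp X‖) ≤ ϑ) (hN : ‖N.comp X‖ ≤ ω) :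
    ‖N r‖ ≤ ω * (ϑ * ‖Ring.inverse X b‖) := by
  set Q := P.comp X
  have hQ : IsUnit Q := hP.mul hX
  have hω : 0 ≤ ω := (norm_nonneg _).trans hN
  have hPr : P r = Q (Ring.inverse X r) := by
    simp [Q, ContinuousLinearMap.apply_ringInverse_apply hX]
  have hPb : P b = Q (Ring.inverse X b) := by
    simp [Q, ContinuousLinearMap.apply_ringInverse_apply hX]
  have hXr : ‖Ring.inverse X r‖ ≤ ϑ * ‖Ring.inverse X b‖ :=
    calc ‖Ring.inverse X r‖ = ‖Ring.inverse Q (P r)‖ := by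
          rw [hPr, ContinuousLinearMap.ringInverse_apply_apply hQ]
      _ ≤ ‖Ring.inverse Q‖ * (η * (‖Q‖ * ‖Ring.inverse X b‖)) := by
          grw [(Ring.inverse Q).le_opNorm, hr, hPb, Q.le_opNorm]
      _ = η * (‖Ring.inverse Q‖ * ‖Q‖) * ‖Ring.inverse X b‖ := by ring
      _ ≤ ϑ * ‖Ring.inverse X b‖ := by gcongr
  calc ‖N r‖ = ‖N.comp X (Ring.inverse X r)‖ := by
        rw [ContinuousLinearMap.comp_apply, ContinuousLinearMap.apply_ringInverse_apply hX]
    _ ≤ ω * (ϑ * ‖Ring.inverse X b‖) := by grw [(N.comp X).le_opNorm, hN, hXr]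

theorem norm_sub_add_mul_norm_le_of_approx {N X : E →L[𝕜] E} {e u r : E} {ω₁ ω₂ ϑ δ q : ℝ}
    (hN₁ : ‖N.comp X‖ ≤ ω₁) (hN₂ : ‖N.comp X - 1‖ ≤ ω₂) (hϑ : 0 ≤ ϑ) (hq : 0 ≤ q)
    (heu : ‖e - u‖ ≤ δ) (hr : ‖N r‖ ≤ ω₁ * (ϑ * ‖u‖)) :
    ‖e - N (X u - r)‖ + q * ‖N (X u - r)‖ ≤
      ω₁ * (1 + ϑ) * (1 + q) * δ + (ω₁ * ((1 + ϑ) * q + ϑ) + ω₂) * ‖e‖ := by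
  set T := N.comp X
  have hω₁ : 0 ≤ ω₁ := (norm_nonneg _).trans hN₁
  have hu : ‖u‖ ≤ ‖e‖ + δ := by
    simpa using (norm_sub_le e (e - u)).trans (by gcongr)
  have hd : ‖N (X u - r)‖ ≤ ω₁ * (1 + ϑ) * ‖u‖ :=
    calc ‖N (X u - r)‖ = ‖T u - N r‖ := by simp [T]
      _ ≤ ω₁ * ‖u‖ + ω₁ * (ϑ * ‖u‖) := by grw [norm_sub_le, T.le_opNorm, hN₁, hr]
      _ = ω₁ * (1 + ϑ) * ‖u‖ := by ring
  have hed : ‖e - N (X u - r)‖ ≤ ω₂ * ‖e‖ + ω₁ * δ + ω₁ * (ϑ * ‖u‖) :=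
    calc ‖e - N (X u - r)‖ = ‖-((T - 1) e) + T (e - u) + N r‖ := by
          congr 1; simp [T]; abel
      _ ≤ ω₂ * ‖e‖ + ω₁ * δ + ω₁ * (ϑ * ‖u‖) := by
          grw [norm_add_le, norm_add_le, norm_neg, (T - 1).le_opNorm, T.le_opNorm, hN₂, hN₁,
            heu, hr]
  have hϑu : ω₁ * (ϑ * ‖u‖) ≤ ω₁ * (ϑ * (‖e‖ + δ)) := by gcongr
  have hqu : q * (ω₁ * (1 + ϑ) * ‖u‖) ≤ q * (ω₁ * (1 + ϑ) * (‖e‖ + δ)) := by gcongr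
  grw [hed, hd]
  linarith

end InexactStep

theorem stmt_8_general (n : ℕ) (Ω : Set (EuclideanSpace ℝ (Fin n)))
    (C : Set (EuclideanSpace ℝ (Fin n)))
    (hCconv : Convex ℝ C) (hCΩ : C ⊆ Ω)
    (F : EuclideanSpace ℝ (Fin n) → EuclideanSpace ℝ (Fin n))
    (F' : EuclideanSpace ℝ (Fin n) →
      (EuclideanSpace ℝ (Fin n) →L[ℝ] EuclideanSpace ℝ (Fin n)))
    (hFderiv : ∀ x ∈ Ω, HasFDerivAt F (F' x) x)
    (xs : EuclideanSpace ℝ (Fin n)) (hxsC : xs ∈ C) (hFxs : F xs = 0)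
    (hinv : IsUnit (F' xs))
    (R : ℝ)
    (κ : ℝ)
    (f f' : ℝ → ℝ)
    (hderiv : ∀ t ∈ Set.Ico 0 R, HasDerivWithinAt f (f' t) (Set.Ico 0 R) t)
    (h1a : f 0 = 0) (h1b : f' 0 = -1)
    (h2 : StrictMonoOn f' (Set.Ico 0 R))
    (hmaj : ∀ τ ∈ Set.Icc (0:ℝ) 1, ∀ x ∈ Metric.ball xs κ,
      ‖(Ring.inverse (F' xs)).comp (F' x - F' (xs + τ • (x - xs)))‖ ≤
        f' ‖x - xs‖ - f' (τ * ‖x - xs‖))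
    (ν : ℝ) (hν : ν = sSup {t | t ∈ Set.Ico 0 R ∧ f' t < 0})
    (ϑ ω₁ ω₂ lam : ℝ)
    (ρ : ℝ)
    (hρ : ρ = sSup {δ | δ ∈ Set.Ioo 0 ν ∧ ∀ t ∈ Set.Ioo 0 δ,
      ω₁ * (1 + ϑ) * (1 + lam) * (f t / (t * f' t) - 1)
        + ω₁ * ((1 + ϑ) * lam + ϑ) + ω₂ < 1})
    (σ : ℝ) (hσ : σ = min κ ρ)
    (x : EuclideanSpace ℝ (Fin n)) (hx : x ∈ C ∩ Metric.ball xs σ)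
    (M P : EuclideanSpace ℝ (Fin n) →L[ℝ] EuclideanSpace ℝ (Fin n))
    (hP : IsUnit P)
    (hM1 : ‖(Ring.inverse M).comp (F' x)‖ ≤ ω₁)
    (hM2 : ‖(Ring.inverse M).comp (F' x) - 1‖ ≤ ω₂)
    (η : ℝ) (hη : 0 ≤ η) (r : EuclideanSpace ℝ (Fin n))
    (hres : ‖P r‖ ≤ η * ‖P (F x)‖)
    (hcond : η * (‖Ring.inverse (P.comp (F' x))‖ * ‖P.comp (F' x)‖) ≤ ϑ)
    (θ : ℝ) :
    ‖x - (Ring.inverse M) (F x - r) - xs‖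
        + Real.sqrt (2 * θ) * ‖(Ring.inverse M) (F x - r)‖ ≤
      ω₁ * (1 + ϑ) * (1 + Real.sqrt (2 * θ))
          * |‖x - xs‖ - f ‖x - xs‖ / f' ‖x - xs‖|
        + (ω₁ * ((1 + ϑ) * Real.sqrt (2 * θ) + ϑ) + ω₂) * ‖x - xs‖ := by
  obtain ⟨hxC, hxσ⟩ := hx
  set s := ‖x - xs‖
  have hsσ : s < σ := mem_ball_iff_norm.mp hxσ
  obtain ⟨δ, ⟨hδν, -⟩, hsδ⟩ := exists_mem_lt_of_nonneg_lt_sSup (norm_nonneg _)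
    (hρ ▸ hsσ.trans_le (hσ ▸ min_le_right κ ρ))
  obtain ⟨t, ⟨ht, hf't⟩, hst⟩ :=
    exists_mem_lt_of_nonneg_lt_sSup (norm_nonneg _) (hν ▸ hsδ.trans hδν.2)
  have hsR : s < R := hst.trans ht.2
  have hf's : f' s < 0 := (h2 ⟨norm_nonneg _, hsR⟩ ht hst).trans hf't
  have hxκ : x ∈ Metric.ball xs κ := mem_ball_iff_norm.mpr (hsσ.trans_le (hσ ▸ min_le_left κ ρ))
  have hseg : ∀ τ ∈ Icc (0 : ℝ) 1,
      HasFDerivAt F (F' (xs + τ • (x - xs))) (xs + τ • (x - xs)) := fun τ hτ =>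
    hFderiv _ (hCΩ (hCconv.add_smul_sub_mem hxsC hxC hτ))
  obtain ⟨hX, hnewton⟩ := isUnit_and_norm_sub_newton_step_le_of_majorant hseg hFxs hinv
    hderiv h1a h1b hsR hf's fun τ hτ => hmaj τ hτ x hxκ
  have hϑ : 0 ≤ ϑ := (mul_nonneg hη (by positivity)).trans hcond
  have key := norm_sub_add_mul_norm_le_of_approx hM1 hM2 hϑ (Real.sqrt_nonneg (2 * θ)) hnewton
    (norm_apply_le_of_relative_residual_le hP hX hη hres hcond hM1)
  rwa [ContinuousLinearMap.apply_ringInverse_apply hX, ← sub_right_comm] at key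

theorem stmt_8 (n : ℕ) (Ω : Set (EuclideanSpace ℝ (Fin n))) (hΩ : IsOpen Ω)
    (C : Set (EuclideanSpace ℝ (Fin n))) (hCne : C.Nonempty)
    (hCconv : Convex ℝ C) (hCcomp : IsCompact C) (hCΩ : C ⊆ Ω)
    (F : EuclideanSpace ℝ (Fin n) → EuclideanSpace ℝ (Fin n))
    (F' : EuclideanSpace ℝ (Fin n) →
      (EuclideanSpace ℝ (Fin n) →L[ℝ] EuclideanSpace ℝ (Fin n)))
    (hFderiv : ∀ x ∈ Ω, HasFDerivAt F (F' x) x)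
    (hFcont : ContinuousOn F' Ω)
    (xs : EuclideanSpace ℝ (Fin n)) (hxsC : xs ∈ C) (hFxs : F xs = 0)
    (hinv : IsUnit (F' xs))
    (R : ℝ) (hR : 0 < R)
    (κ : ℝ) (hκ : κ = sSup {t | t ∈ Set.Ico 0 R ∧ Metric.ball xs t ⊆ Ω})
    (f f' : ℝ → ℝ)
    (hderiv : ∀ t ∈ Set.Ico 0 R, HasDerivWithinAt f (f' t) (Set.Ico 0 R) t)
    (hcont : ContinuousOn f' (Set.Ico 0 R))
    (h1a : f 0 = 0) (h1b : f' 0 = -1)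
    (h2 : StrictMonoOn f' (Set.Ico 0 R))
    (hmaj : ∀ τ ∈ Set.Icc (0:ℝ) 1, ∀ x ∈ Metric.ball xs κ,
      ‖(Ring.inverse (F' xs)).comp (F' x - F' (xs + τ • (x - xs)))‖ ≤
        f' ‖x - xs‖ - f' (τ * ‖x - xs‖))
    (ν : ℝ) (hν : ν = sSup {t | t ∈ Set.Ico 0 R ∧ f' t < 0})
    (ϑ ω₁ ω₂ lam : ℝ)
    (hϑ0 : 0 ≤ ϑ) (hϑ1 : ϑ < 1) (hω₂0 : 0 ≤ ω₂) (hω₁₂ : ω₂ < ω₁)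
    (hωϑ : ω₁ * ϑ + ω₂ < 1)
    (hlam0 : 0 ≤ lam) (hlam : lam < (1 - ω₂ - ω₁ * ϑ) / (ω₁ * (1 + ϑ)))
    (ρ : ℝ)
    (hρ : ρ = sSup {δ | δ ∈ Set.Ioo 0 ν ∧ ∀ t ∈ Set.Ioo 0 δ,
      ω₁ * (1 + ϑ) * (1 + lam) * (f t / (t * f' t) - 1)
        + ω₁ * ((1 + ϑ) * lam + ϑ) + ω₂ < 1})
    (σ : ℝ) (hσ : σ = min κ ρ)
    (x : EuclideanSpace ℝ (Fin n)) (hx : x ∈ C ∩ Metric.ball xs σ) (hxne : x ≠ xs)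
    (M P : EuclideanSpace ℝ (Fin n) →L[ℝ] EuclideanSpace ℝ (Fin n))
    (hM : IsUnit M) (hP : IsUnit P)
    (hM1 : ‖(Ring.inverse M).comp (F' x)‖ ≤ ω₁)
    (hM2 : ‖(Ring.inverse M).comp (F' x) - 1‖ ≤ ω₂)
    (η : ℝ) (hη : 0 ≤ η) (r : EuclideanSpace ℝ (Fin n))
    (hres : ‖P r‖ ≤ η * ‖P (F x)‖)
    (hcond : η * (‖Ring.inverse (P.comp (F' x))‖ * ‖P.comp (F' x)‖) ≤ ϑ)
    (θ : ℝ) (hθ : 0 ≤ θ) :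
    ‖x - (Ring.inverse M) (F x - r) - xs‖
        + Real.sqrt (2 * θ) * ‖(Ring.inverse M) (F x - r)‖ ≤
      ω₁ * (1 + ϑ) * (1 + Real.sqrt (2 * θ))
          * |‖x - xs‖ - f ‖x - xs‖ / f' ‖x - xs‖|
        + (ω₁ * ((1 + ϑ) * Real.sqrt (2 * θ) + ϑ) + ω₂) * ‖x - xs‖ :=
  stmt_8_general n Ω C hCconv hCΩ F F' hFderiv xs hxsC hFxs hinv R κ f f' hderiv h1a h1b h2 hmaj ν
    hν ϑ ω₁ ω₂ lam ρ hρ σ hσ x hx M P hP hM1 hM2 η hη r hres hcond θ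
end

section
/- Let f, ν, n_f and constants ϑ, ω₁, ω₂, λ, ρ be as in the majorant setting, and let {θ_k} ⊂ [0, λ²/2]. Define the real sequence t₀ ∈ (0, ρ), t_{k+1} := ω₁(1+ϑ)(1+√(2θ_k))|n_f(t_k)| + (ω₁[(1+ϑ)√(2θ_k) + ϑ] + ω₂)t_k for k ≥ 0. Then {t_k} is well defined (t_k ∈ (0, ρ) for all k), strictly decreasing, converges to 0, and limsup_{k→∞} t_{k+1}/t_k = ω₁[(1+ϑ)√(2θ̃) + ϑ] + ω₂, where θ̃ := limsup_{k→∞} θ_k. -/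
/-!
Write `q(t) = f(t)/(t f'(t)) - 1`. Since `f'` is strictly increasing, `f` is strictly convex and
`f(t) < t f'(t)`; on `(0, ν)`, where `f' < 0`, this gives `q(t) > 0` and `|n_f(t)| = t q(t)`. Hence
`t_{k+1} = c(√(2θ_k), q(t_k)) t_k` for the contraction factor
`c(s, q) = ω₁(1+ϑ)(1+s) q + ω₁((1+ϑ)s + ϑ) + ω₂`, which is increasing in `s`, and the defining
property of `ρ` is exactly `c(λ, q(t)) < 1` on `(0, ρ)`. As `√(2θ_k) ≤ λ`, the sequence stays in
`(0, ρ)` and decreases strictly; a positive limit `L` would satisfy `L ≤ c(λ, q(L)) L < L`, so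
`t_k → 0`. Finally `q(t) → f'(0)/f'(0) - 1 = 0` as `t → 0⁺`, so the ratios
`t_{k+1}/t_k = c(√(2θ_k), q(t_k))` have the same limsup as `c(√(2θ_k), 0)`, a continuous
increasing function of `θ_k`.
-/

open Filter Set Topology

theorem Filter.limsup_add_of_tendsto_zero {ι α : Type*} [AddCommGroup α]
    [ConditionallyCompleteLinearOrder α] [DenselyOrdered α] [AddLeftMono α] [TopologicalSpace α]
    [OrderTopology α] {l : Filter ι} [l.NeBot] {u v : ι → α} (hu : Tendsto u l (𝓝 0))
    (hv : IsBoundedUnder (· ≤ ·) l v) (hv' : IsBoundedUnder (· ≥ ·) l v) :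
    limsup (u + v) l = limsup v l := by
  apply le_antisymm
  · simpa [hu.limsup_eq] using
      limsup_add_le hu.isBoundedUnder_ge hu.isBoundedUnder_le hv'.isCoboundedUnder_le hv
  · simpa [hu.liminf_eq, add_comm u] using
      le_limsup_add hv hv'.isCoboundedUnder_le hu.isBoundedUnder_le hu.isBoundedUnder_ge

theorem forall_mem_Ioo_and_strictAnti {α : Type*} [Preorder α] {t : ℕ → α} {a b : α}
    (h0 : t 0 ∈ Ioo a b) (hstep : ∀ k, t k ∈ Ioo a b → a < t (k + 1) ∧ t (k + 1) < t k) :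
    (∀ k, t k ∈ Ioo a b) ∧ StrictAnti t := by
  have hmem : ∀ k, t k ∈ Ioo a b := by
    intro k
    induction k with
    | zero => exact h0
    | succ k ih => exact ⟨(hstep k ih).1, (hstep k ih).2.trans ih.2⟩
  exact ⟨hmem, strictAnti_nat_of_succ_lt fun k => (hstep k (hmem k)).2⟩

theorem tendsto_zero_of_succ_le_of_lt_self {t : ℕ → ℝ} {G : ℝ → ℝ} {ρ : ℝ} (ht : Antitone t)
    (hpos : ∀ k, 0 < t k) (ht0 : t 0 < ρ) (hG : ∀ x ∈ Ioo 0 ρ, ContinuousAt G x ∧ G x < x)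
    (hle : ∀ k, t (k + 1) ≤ G (t k)) : Tendsto t atTop (𝓝 0) := by
  have hbdd : BddBelow (range t) := ⟨0, by rintro _ ⟨k, rfl⟩; exact (hpos k).le⟩
  have hL := tendsto_atTop_ciInf ht hbdd
  set L := ⨅ k, t k
  suffices L = 0 by rwa [this] at hL
  by_contra hL0
  obtain ⟨hGc, hGL⟩ := hG L ⟨(le_ciInf fun k => (hpos k).le).lt_of_ne' hL0,
    (ciInf_le hbdd 0).trans_lt ht0⟩
  have : L ≤ G L :=
    le_of_tendsto_of_tendsto' (hL.comp (tendsto_add_atTop_nat 1)) (hGc.tendsto.comp hL) hle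
  exact this.not_gt hGL

theorem lt_and_of_mem_Ioo_sSup {P : ℝ → Prop} {ν t : ℝ}
    (ht : t ∈ Ioo 0 (sSup {δ | δ ∈ Ioo 0 ν ∧ ∀ s ∈ Ioo 0 δ, P s})) : t < ν ∧ P t := by
  have hne : {δ | δ ∈ Ioo 0 ν ∧ ∀ s ∈ Ioo 0 δ, P s}.Nonempty := by
    by_contra h
    rw [not_nonempty_iff_eq_empty] at h
    rw [h, Real.sSup_empty] at ht
    exact ht.1.not_gt ht.2
  obtain ⟨δ, ⟨hδ, hP⟩, htδ⟩ := exists_lt_of_lt_csSup hne ht.2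
  exact ⟨htδ.trans hδ.2, hP t ⟨ht.1, htδ⟩⟩

theorem abs_sub_div_eq_mul_of_lt_mul {t y d : ℝ} (ht : 0 < t) (hd : d < 0) (hy : y < t * d) :
    |t - y / d| = t * (y / (t * d) - 1) := by
  have : t < y / d := by rw [lt_div_iff_of_neg hd]; linarith
  rw [abs_of_neg (by linarith)]
  field_simp
  ring

theorem sqrt_two_mul_mem_Icc {x lam : ℝ} (hlam : 0 ≤ lam) (hx : x ∈ Icc 0 (lam ^ 2 / 2)) :
    √(2 * x) ∈ Icc 0 lam :=
  ⟨Real.sqrt_nonneg _, (Real.sqrt_le_sqrt (show 2 * x ≤ lam ^ 2 by linarith [hx.2])).trans_eq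
    (Real.sqrt_sq hlam)⟩

section Majorant

variable {f f' : ℝ → ℝ} {R : ℝ}

theorem lt_and_neg_of_mem_Ico_sSup (hmono : MonotoneOn f' (Ico 0 R)) {t : ℝ}
    (ht : t ∈ Ico 0 (sSup {s | s ∈ Ico 0 R ∧ f' s < 0})) : t < R ∧ f' t < 0 := by
  have hne : {s | s ∈ Ico 0 R ∧ f' s < 0}.Nonempty := by
    by_contra h
    rw [not_nonempty_iff_eq_empty] at h
    rw [h, Real.sSup_empty] at ht
    exact ht.1.not_gt ht.2
  obtain ⟨s, ⟨hs, hs'⟩, hts⟩ := exists_lt_of_lt_csSup hne ht.2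
  exact ⟨hts.trans hs.2, (hmono ⟨ht.1, hts.trans hs.2⟩ hs hts.le).trans_lt hs'⟩

theorem sub_lt_mul_of_strictMonoOn_deriv_s13
    (hf : ∀ t ∈ Ico 0 R, HasDerivWithinAt f (f' t) (Ico 0 R) t)
    (hmono : StrictMonoOn f' (Ico 0 R)) {t : ℝ} (ht : t ∈ Ioo 0 R) : f t - f 0 < t * f' t := by
  have hcont : ContinuousOn f (Icc 0 t) := fun x hx =>
    (hf x ⟨hx.1, hx.2.trans_lt ht.2⟩).continuousWithinAt.mono (Icc_subset_Ico_right ht.2)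
  obtain ⟨c, hc, hslope⟩ := exists_hasDerivAt_eq_slope f f' ht.1 hcont fun x hx =>
    (hf x ⟨hx.1.le, hx.2.trans ht.2⟩).hasDerivAt (Ico_mem_nhds hx.1 (hx.2.trans ht.2))
  have hct : f' c < f' t := hmono ⟨hc.1.le, hc.2.trans ht.2⟩ ⟨ht.1.le, ht.2⟩ hc.2
  calc f t - f 0 = t * f' c := by rw [hslope, sub_zero, mul_div_cancel₀ _ ht.1.ne']
    _ < t * f' t := mul_lt_mul_of_pos_left hct ht.1

theorem continuousAt_div_mul_deriv
    (hf : ∀ t ∈ Ico 0 R, HasDerivWithinAt f (f' t) (Ico 0 R) t)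
    (hf' : ContinuousOn f' (Ico 0 R)) {x : ℝ} (hx : x ∈ Ioo 0 R) (hx' : f' x ≠ 0) :
    ContinuousAt (fun t => f t / (t * f' t)) x := by
  have hnhds := Ico_mem_nhds hx.1 hx.2
  exact ((hf x (Ioo_subset_Ico_self hx)).hasDerivAt hnhds).continuousAt.div
    (continuousAt_id.mul (hf'.continuousAt hnhds)) (mul_ne_zero hx.1.ne' hx')

theorem tendsto_div_mul_deriv_nhdsGT_zero (h0 : f 0 = 0)
    (hf : HasDerivWithinAt f (f' 0) (Ioi 0) 0) (hf' : ContinuousWithinAt f' (Ioi 0) 0)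
    (hne : f' 0 ≠ 0) : Tendsto (fun t => f t / (t * f' t)) (𝓝[>] 0) (𝓝 1) := by
  have hslope := hasDerivWithinAt_iff_tendsto_slope.mp hf
  rw [sdiff_singleton_eq_self self_notMem_Ioi] at hslope
  refine (div_self hne ▸ hslope.div hf' hne).congr fun t => ?_
  rw [Pi.div_apply, slope_def_field, h0, sub_zero, sub_zero, div_div]

end Majorant

section ContractionFactor

variable (ω₁ ω₂ ϑ : ℝ)

def contractionFactor (s q : ℝ) : ℝ :=
  ω₁ * (1 + ϑ) * (1 + s) * q + ω₁ * ((1 + ϑ) * s + ϑ) + ω₂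

variable {ω₁ ω₂ ϑ}

theorem continuous_contractionFactor (s : ℝ) : Continuous (contractionFactor ω₁ ω₂ ϑ s) := by
  unfold contractionFactor
  fun_prop

theorem monotone_contractionFactor (hω₁ : 0 ≤ ω₁) (hϑ : 0 ≤ ϑ) {q : ℝ} (hq : 0 ≤ q) :
    Monotone (contractionFactor ω₁ ω₂ ϑ · q) := by
  intro s s' hs
  have : 0 ≤ ω₁ * (1 + ϑ) := by positivity
  simp only [contractionFactor]
  nlinarith [mul_nonneg this (mul_nonneg (sub_nonneg.2 hs) hq), mul_nonneg this (sub_nonneg.2 hs)]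

theorem contractionFactor_pos (hω₁ : 0 < ω₁) (hω₂ : 0 ≤ ω₂) (hϑ : 0 ≤ ϑ) {s q : ℝ} (hs : 0 ≤ s)
    (hq : 0 < q) : 0 < contractionFactor ω₁ ω₂ ϑ s q := by
  unfold contractionFactor
  positivity

theorem limsup_contractionFactor (hω₁ : 0 ≤ ω₁) (hϑ : 0 ≤ ϑ) {θ q : ℕ → ℝ} {a b : ℝ}
    (hθ : ∀ k, θ k ∈ Icc a b) (hq : Tendsto q atTop (𝓝 0)) :
    limsup (fun k => contractionFactor ω₁ ω₂ ϑ √(2 * θ k) (q k)) atTop =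
      contractionFactor ω₁ ω₂ ϑ √(2 * limsup θ atTop) 0 := by
  set g : ℝ → ℝ := fun x => contractionFactor ω₁ ω₂ ϑ √(2 * x) 0
  have hg : Monotone g := (monotone_contractionFactor hω₁ hϑ le_rfl).comp
    fun x y hxy => Real.sqrt_le_sqrt (by linarith)
  have hθa : IsBoundedUnder (· ≥ ·) atTop θ := isBoundedUnder_of ⟨a, fun k => (hθ k).1⟩
  have hθb : IsBoundedUnder (· ≤ ·) atTop θ := isBoundedUnder_of ⟨b, fun k => (hθ k).2⟩
  have hsq : IsBoundedUnder (· ≤ ·) atTop ((‖·‖) ∘ fun k => ω₁ * (1 + ϑ) * (1 + √(2 * θ k))) := by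
    refine isBoundedUnder_of ⟨ω₁ * (1 + ϑ) * (1 + √(2 * b)), fun k => ?_⟩
    have : √(2 * θ k) ≤ √(2 * b) := Real.sqrt_le_sqrt (by linarith [(hθ k).2])
    simp only [Function.comp_apply, Real.norm_eq_abs]
    rw [abs_of_nonneg (by positivity)]
    gcongr
  have hcont : ContinuousAt g (limsup θ atTop) := by
    simp only [g, contractionFactor]
    fun_prop
  calc limsup (fun k => contractionFactor ω₁ ω₂ ϑ √(2 * θ k) (q k)) atTop
      = limsup ((fun k => ω₁ * (1 + ϑ) * (1 + √(2 * θ k)) * q k) + g ∘ θ) atTop := by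
        congr 1; ext k; simp only [g, contractionFactor, Pi.add_apply, Function.comp_apply]; ring
    _ = limsup (g ∘ θ) atTop :=
        limsup_add_of_tendsto_zero (isBoundedUnder_le_mul_tendsto_zero hsq hq)
          (isBoundedUnder_of ⟨g b, fun k => hg (hθ k).2⟩)
          (isBoundedUnder_of ⟨g a, fun k => hg (hθ k).1⟩)
    _ = g (limsup θ atTop) :=
        (hg.map_limsup_of_continuousAt θ hcont hθb hθa.isCoboundedUnder_le).symm

theorem tendsto_zero_of_eq_contractionFactor_mul (hω₁ : 0 < ω₁) (hω₂ : 0 ≤ ω₂) (hϑ : 0 ≤ ϑ)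
    {q : ℝ → ℝ} {s t : ℕ → ℝ} {ρ lam : ℝ}
    (hq : ∀ x ∈ Ioo 0 ρ, 0 < q x ∧ ContinuousAt q x ∧ contractionFactor ω₁ ω₂ ϑ lam (q x) < 1)
    (hs : ∀ k, s k ∈ Icc 0 lam) (ht0 : t 0 ∈ Ioo 0 ρ)
    (ht : ∀ k, t k ∈ Ioo 0 ρ → t (k + 1) = contractionFactor ω₁ ω₂ ϑ (s k) (q (t k)) * t k) :
    (∀ k, t k ∈ Ioo 0 ρ) ∧ StrictAnti t ∧ Tendsto t atTop (𝓝 0) := by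
  have hle : ∀ k, t k ∈ Ioo 0 ρ → t (k + 1) ≤ contractionFactor ω₁ ω₂ ϑ lam (q (t k)) * t k :=
    fun k hk => ht k hk ▸ mul_le_mul_of_nonneg_right
      (monotone_contractionFactor hω₁.le hϑ (hq _ hk).1.le (hs k).2) hk.1.le
  obtain ⟨hmem, hanti⟩ := forall_mem_Ioo_and_strictAnti ht0 fun k hk =>
    ⟨ht k hk ▸ mul_pos (contractionFactor_pos hω₁ hω₂ hϑ (hs k).1 (hq _ hk).1) hk.1,
      (hle k hk).trans_lt (mul_lt_of_lt_one_left hk.1 (hq _ hk).2.2)⟩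
  refine ⟨hmem, hanti, tendsto_zero_of_succ_le_of_lt_self hanti.antitone (fun k => (hmem k).1)
    ht0.2 (fun x hx => ⟨?_, mul_lt_of_lt_one_left hx.1 (hq x hx).2.2⟩) fun k => hle k (hmem k)⟩
  exact ((continuous_contractionFactor lam).continuousAt.comp (hq x hx).2.1).mul continuousAt_id

end ContractionFactor


theorem stmt_13_general (R : ℝ) (hR : 0 < R) (f f' : ℝ → ℝ)
    (hderiv : ∀ t ∈ Set.Ico 0 R, HasDerivWithinAt f (f' t) (Set.Ico 0 R) t)
    (hcont : ContinuousOn f' (Set.Ico 0 R))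
    (h1a : f 0 = 0) (h1b : f' 0 = -1)
    (h2 : StrictMonoOn f' (Set.Ico 0 R))
    (ν : ℝ) (hν : ν = sSup {t | t ∈ Set.Ico 0 R ∧ f' t < 0})
    (nf : ℝ → ℝ) (hnf : ∀ t, nf t = t - f t / f' t)
    (ϑ ω₁ ω₂ lam : ℝ)
    (hϑ0 : 0 ≤ ϑ) (hω₂0 : 0 ≤ ω₂) (hω₁₂ : ω₂ < ω₁)
    (hlam0 : 0 ≤ lam)
    (ρ : ℝ)
    (hρ : ρ = sSup {δ | δ ∈ Set.Ioo 0 ν ∧ ∀ t ∈ Set.Ioo 0 δ,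
      ω₁ * (1 + ϑ) * (1 + lam) * (f t / (t * f' t) - 1)
        + ω₁ * ((1 + ϑ) * lam + ϑ) + ω₂ < 1})
    (θ : ℕ → ℝ) (hθ : ∀ k, θ k ∈ Set.Icc 0 (lam ^ 2 / 2))
    (tk : ℕ → ℝ) (ht0 : tk 0 ∈ Set.Ioo 0 ρ)
    (htk : ∀ k, tk (k + 1) =
      ω₁ * (1 + ϑ) * (1 + Real.sqrt (2 * θ k)) * |nf (tk k)|
        + (ω₁ * ((1 + ϑ) * Real.sqrt (2 * θ k) + ϑ) + ω₂) * tk k) :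
    (∀ k, tk k ∈ Set.Ioo 0 ρ) ∧ StrictAnti tk ∧
      Filter.Tendsto tk Filter.atTop (nhds 0) ∧
      Filter.limsup (fun k => tk (k + 1) / tk k) Filter.atTop =
        ω₁ * ((1 + ϑ) * Real.sqrt (2 * Filter.limsup θ Filter.atTop) + ϑ) + ω₂ := by
  have hω₁ : 0 < ω₁ := hω₂0.trans_lt hω₁₂
  set c := contractionFactor ω₁ ω₂ ϑ
  set q : ℝ → ℝ := fun t => f t / (t * f' t) - 1
  have hbelowρ : ∀ t ∈ Ioo 0 ρ, t < R ∧ f' t < 0 ∧ c lam (q t) < 1 := by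
    intro t ht
    obtain ⟨htν, hct⟩ := lt_and_of_mem_Ioo_sSup (hρ ▸ ht)
    have htν' : t ∈ Ico 0 (sSup {s | s ∈ Ico 0 R ∧ f' s < 0}) := hν ▸ ⟨ht.1.le, htν⟩
    obtain ⟨htR, hf't⟩ := lt_and_neg_of_mem_Ico_sSup h2.monotoneOn htν'
    exact ⟨htR, hf't, hct⟩
  have hq : ∀ t ∈ Ioo 0 ρ, 0 < q t ∧ |nf t| = t * q t := by
    intro t ht
    obtain ⟨htR, hf't, -⟩ := hbelowρ t ht
    have hlt : f t < t * f' t := by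
      simpa [h1a] using sub_lt_mul_of_strictMonoOn_deriv_s13 hderiv h2 ⟨ht.1, htR⟩
    exact ⟨sub_pos.2 ((one_lt_div_of_neg (mul_neg_of_pos_of_neg ht.1 hf't)).2 hlt),
      hnf t ▸ abs_sub_div_eq_mul_of_lt_mul ht.1 hf't hlt⟩
  have hrec : ∀ k, tk k ∈ Ioo 0 ρ → tk (k + 1) = c √(2 * θ k) (q (tk k)) * tk k := by
    intro k hk
    rw [htk, (hq _ hk).2]
    simp only [c, contractionFactor]
    ring
  obtain ⟨hmem, hanti, hlim⟩ := tendsto_zero_of_eq_contractionFactor_mul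
    hω₁ hω₂0 hϑ0 (fun x hx => ⟨(hq x hx).1,
      (continuousAt_div_mul_deriv hderiv hcont ⟨hx.1, (hbelowρ x hx).1⟩
        (hbelowρ x hx).2.1.ne).sub_const 1, (hbelowρ x hx).2.2⟩)
    (fun k => sqrt_two_mul_mem_Icc hlam0 (hθ k)) ht0 hrec
  have hqlim : Tendsto (fun k => q (tk k)) atTop (𝓝 0) := by
    have hIco : Ico 0 R ∈ 𝓝[>] (0 : ℝ) :=
      mem_of_superset (Ioo_mem_nhdsGT hR) Ioo_subset_Ico_self
    have hq0 := tendsto_div_mul_deriv_nhdsGT_zero h1a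
      ((hderiv 0 ⟨le_rfl, hR⟩).mono_of_mem_nhdsWithin hIco)
      ((hcont 0 ⟨le_rfl, hR⟩).mono_of_mem_nhdsWithin hIco) (by rw [h1b]; norm_num)
    exact sub_self (1 : ℝ) ▸ (hq0.sub_const 1).comp
      (tendsto_nhdsWithin_iff.2 ⟨hlim, Eventually.of_forall fun k => (hmem k).1⟩)
  refine ⟨hmem, hanti, hlim, ?_⟩
  calc limsup (fun k => tk (k + 1) / tk k) atTop
      = limsup (fun k => c √(2 * θ k) (q (tk k))) atTop := by
        congr 1; ext k; rw [hrec k (hmem k), mul_div_cancel_right₀ _ (hmem k).1.ne']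
    _ = c √(2 * limsup θ atTop) 0 :=
        limsup_contractionFactor hω₁.le hϑ0 hθ hqlim
    _ = _ := by simp only [c, contractionFactor]; ring

theorem stmt_13 (R : ℝ) (hR : 0 < R) (f f' : ℝ → ℝ)
    (hderiv : ∀ t ∈ Set.Ico 0 R, HasDerivWithinAt f (f' t) (Set.Ico 0 R) t)
    (hcont : ContinuousOn f' (Set.Ico 0 R))
    (h1a : f 0 = 0) (h1b : f' 0 = -1)
    (h2 : StrictMonoOn f' (Set.Ico 0 R))
    (ν : ℝ) (hν : ν = sSup {t | t ∈ Set.Ico 0 R ∧ f' t < 0})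
    (nf : ℝ → ℝ) (hnf : ∀ t, nf t = t - f t / f' t)
    (ϑ ω₁ ω₂ lam : ℝ)
    (hϑ0 : 0 ≤ ϑ) (hϑ1 : ϑ < 1) (hω₂0 : 0 ≤ ω₂) (hω₁₂ : ω₂ < ω₁)
    (hωϑ : ω₁ * ϑ + ω₂ < 1)
    (hlam0 : 0 ≤ lam) (hlam : lam < (1 - ω₂ - ω₁ * ϑ) / (ω₁ * (1 + ϑ)))
    (ρ : ℝ)
    (hρ : ρ = sSup {δ | δ ∈ Set.Ioo 0 ν ∧ ∀ t ∈ Set.Ioo 0 δ,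
      ω₁ * (1 + ϑ) * (1 + lam) * (f t / (t * f' t) - 1)
        + ω₁ * ((1 + ϑ) * lam + ϑ) + ω₂ < 1})
    (θ : ℕ → ℝ) (hθ : ∀ k, θ k ∈ Set.Icc 0 (lam ^ 2 / 2))
    (tk : ℕ → ℝ) (ht0 : tk 0 ∈ Set.Ioo 0 ρ)
    (htk : ∀ k, tk (k + 1) =
      ω₁ * (1 + ϑ) * (1 + Real.sqrt (2 * θ k)) * |nf (tk k)|
        + (ω₁ * ((1 + ϑ) * Real.sqrt (2 * θ k) + ϑ) + ω₂) * tk k) :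
    (∀ k, tk k ∈ Set.Ioo 0 ρ) ∧ StrictAnti tk ∧
      Filter.Tendsto tk Filter.atTop (nhds 0) ∧
      Filter.limsup (fun k => tk (k + 1) / tk k) Filter.atTop =
        ω₁ * ((1 + ϑ) * Real.sqrt (2 * Filter.limsup θ Filter.atTop) + ϑ) + ω₂ :=
  stmt_13_general R hR f f' hderiv hcont h1a h1b h2 ν hν nf hnf ϑ ω₁ ω₂ lam hϑ0 hω₂0 hω₁₂ hlam0 ρ hρ
    θ hθ tk ht0 htk
end
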